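/- arXiv:2112.01791 — 4 statements merged into one kernel-verified Lean document; each statement's English description precedes it below -/
import Mathlib

section
/- Let $p > 1$, $m, \beta \in \mathbb{R}$ with $\frac{m+1}{p} < 1 - \beta$, and let $f \in L^p((0,\infty); y^m\,dy)$. Define $(H_1 f)(y) = y^{\beta-1} \int_0^y f(s) s^{-\beta}\,ds$. Then $\|H_1 f\|_{L^p((0,\infty); y^m dy)} \le C \|f\|_{L^p((0,\infty); y^m dy)}$ with $C = \left|\frac{m+1}{p} - (1-\beta)\right|^{-1}$. -/
open MeasureTheory Filter
open scoped ENNReal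

/-- The weighted measure `y^m dy` on `(0,∞)`. -/
noncomputable def wm (m : ℝ) : Measure ℝ :=
  (volume.restrict (Set.Ioi 0)).withDensity fun y => ENNReal.ofReal (y ^ m)

/-! With `r = 1 - β - (m + 1) / p > 0`, Hölder's inequality on `(0, y)` against the weight
`s^{(r-1)(p-1)/p}` gives the pointwise bound
`|H₁ f (y)|^p y^m ≤ r^{1-p} y^{-r-1} ∫_0^y |f s|^p s^{m+r} ds`.
Integrating in `y` and exchanging the order of integration, the inner integral
`∫_s^∞ y^{-r-1} dy = s^{-r} / r` turns the weight `s^{m+r}` back into `s^m`, which leaves the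
constant `r^{-p}`. -/

open Set

lemma measurable_ofReal_rpow (t : ℝ) : Measurable fun y : ℝ => ENNReal.ofReal (y ^ t) :=
  (measurable_id.pow_const t).ennreal_ofReal

lemma ofReal_rpow_mul_ofReal_rpow {x : ℝ} (hx : 0 < x) (a b : ℝ) :
    ENNReal.ofReal (x ^ a) * ENNReal.ofReal (x ^ b) = ENNReal.ofReal (x ^ (a + b)) := by
  rw [← ENNReal.ofReal_mul (Real.rpow_nonneg hx.le _), Real.rpow_add hx]

lemma ofReal_rpow_rpow {x : ℝ} (hx : 0 < x) (a b : ℝ) :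
    ENNReal.ofReal (x ^ a) ^ b = ENNReal.ofReal (x ^ (a * b)) := by
  rw [ENNReal.ofReal_rpow_of_pos (Real.rpow_pos_of_pos hx _), Real.rpow_mul hx.le]

lemma lintegral_Ioo_ofReal_rpow {t y : ℝ} (ht : -1 < t) (hy : 0 < y) :
    ∫⁻ s in Ioo 0 y, ENNReal.ofReal (s ^ t) = ENNReal.ofReal (y ^ (t + 1) / (t + 1)) := by
  have hint : IntegrableOn (fun s : ℝ => s ^ t) (Ioo 0 y) :=
    (intervalIntegral.intervalIntegrable_rpow' ht).1.mono_set Ioo_subset_Ioc_self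
  rw [← ofReal_integral_eq_lintegral_ofReal hint
      (ae_restrict_of_forall_mem measurableSet_Ioo fun s hs => (Real.rpow_nonneg hs.1.le _)),
    ← integral_Ioc_eq_integral_Ioo, ← intervalIntegral.integral_of_le hy.le,
    integral_rpow (Or.inl ht), Real.zero_rpow (by linarith), sub_zero]

lemma lintegral_Ioi_ofReal_rpow {t s : ℝ} (ht : t < -1) (hs : 0 < s) :
    ∫⁻ y in Ioi s, ENNReal.ofReal (y ^ t) = ENNReal.ofReal (s ^ (t + 1) / -(t + 1)) := by
  rw [← ofReal_integral_eq_lintegral_ofReal (integrableOn_Ioi_rpow_of_lt ht hs)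
      (ae_restrict_of_forall_mem measurableSet_Ioi fun y hy => Real.rpow_nonneg (hs.trans hy).le _),
    integral_Ioi_rpow_of_lt ht hs, div_neg, neg_div]

lemma rpow_lintegral_Ioo_le {p r y : ℝ} (hp : 1 < p) (hr : 0 < r) (hy : 0 < y)
    {G : ℝ → ℝ≥0∞} (hG : AEMeasurable G (volume.restrict (Ioo 0 y))) :
    (∫⁻ s in Ioo 0 y, G s) ^ p ≤ ENNReal.ofReal (y ^ r / r) ^ (p - 1) *
      ∫⁻ s in Ioo 0 y, G s ^ p * ENNReal.ofReal (s ^ ((1 - r) * (p - 1))) := by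
  set q := p.conjExponent
  have hpq : p.HolderConjugate q := .conjExponent hp
  -- Hölder for `G = (G s^{-c}) s^c`, with `c` chosen so that `(s^c)^q = s^{r-1}`.
  set c := (r - 1) / q
  have hsplit : ∫⁻ s in Ioo 0 y, G s = ∫⁻ s in Ioo 0 y,
      ((fun s => G s * ENNReal.ofReal (s ^ (-c))) * fun s => ENNReal.ofReal (s ^ c)) s := by
    refine setLIntegral_congr_fun measurableSet_Ioo fun s hs => ?_
    rw [Pi.mul_apply, mul_assoc, ofReal_rpow_mul_ofReal_rpow hs.1, neg_add_cancel,
      Real.rpow_zero, ENNReal.ofReal_one, mul_one]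
  have hfirst : ∫⁻ s in Ioo 0 y, (G s * ENNReal.ofReal (s ^ (-c))) ^ p =
      ∫⁻ s in Ioo 0 y, G s ^ p * ENNReal.ofReal (s ^ ((1 - r) * (p - 1))) := by
    refine setLIntegral_congr_fun measurableSet_Ioo fun s hs => ?_
    rw [ENNReal.mul_rpow_of_nonneg _ _ hpq.nonneg, ofReal_rpow_rpow hs.1]
    congr 3
    simp only [c, q, Real.conjExponent]
    field_simp [sub_ne_zero.mpr hp.ne']
    ring
  have hsecond : ∫⁻ s in Ioo 0 y, ENNReal.ofReal (s ^ c) ^ q = ENNReal.ofReal (y ^ r / r) := by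
    rw [← sub_add_cancel r 1, ← lintegral_Ioo_ofReal_rpow (by linarith) hy]
    refine setLIntegral_congr_fun measurableSet_Ioo fun s hs => ?_
    rw [ofReal_rpow_rpow hs.1, div_mul_cancel₀ _ hpq.symm.ne_zero]
  have hholder := ENNReal.lintegral_mul_le_Lp_mul_Lq _ hpq
    (f := fun s => G s * ENNReal.ofReal (s ^ (-c))) (g := fun s => ENNReal.ofReal (s ^ c))
    (hG.mul (measurable_ofReal_rpow (-c)).aemeasurable)
    (measurable_ofReal_rpow c).aemeasurable
  rw [← hsplit, hfirst, hsecond] at hholder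
  calc (∫⁻ s in Ioo 0 y, G s) ^ p
      ≤ ((∫⁻ s in Ioo 0 y, G s ^ p * ENNReal.ofReal (s ^ ((1 - r) * (p - 1)))) ^ (1 / p) *
          ENNReal.ofReal (y ^ r / r) ^ (1 / q)) ^ p := ENNReal.rpow_le_rpow hholder hpq.nonneg
    _ = _ := by
      rw [ENNReal.mul_rpow_of_nonneg _ _ hpq.nonneg, ← ENNReal.rpow_mul, ← ENNReal.rpow_mul,
        one_div_mul_cancel hpq.ne_zero, ENNReal.rpow_one, mul_comm]
      congr 2
      simp only [q, Real.conjExponent]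
      field_simp

lemma lintegral_Ioi_mul_lintegral_Ioo {k G : ℝ → ℝ≥0∞} (hk : Measurable k) (hG : Measurable G) :
    ∫⁻ y in Ioi 0, k y * ∫⁻ s in Ioo 0 y, G s = ∫⁻ s in Ioi 0, G s * ∫⁻ y in Ioi s, k y := by
  set F : ℝ → ℝ → ℝ≥0∞ := fun y s => if s < y then k y * G s else 0
  have hF : Measurable (Function.uncurry F) :=
    Measurable.ite (measurableSet_lt measurable_snd measurable_fst)
      ((hk.comp measurable_fst).mul (hG.comp measurable_snd)) measurable_const
  calc ∫⁻ y in Ioi 0, k y * ∫⁻ s in Ioo 0 y, G s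
      = ∫⁻ y in Ioi 0, ∫⁻ s in Ioi 0, F y s := by
        refine lintegral_congr fun y => ?_
        have hFy : F y = (Iio y).indicator fun s => k y * G s := by
          ext s; simp [F, indicator]
        rw [hFy, lintegral_indicator measurableSet_Iio, Measure.restrict_restrict measurableSet_Iio,
          Iio_inter_Ioi, lintegral_const_mul _ hG]
    _ = ∫⁻ s in Ioi 0, ∫⁻ y in Ioi 0, F y s := lintegral_lintegral_swap hF.aemeasurable
    _ = ∫⁻ s in Ioi 0, G s * ∫⁻ y in Ioi s, k y := by
        refine setLIntegral_congr_fun measurableSet_Ioi fun s hs => ?_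
        have hFs : (F · s) = (Ioi s).indicator fun y => k y * G s := by
          ext y; simp [F, indicator]
        rw [hFs, lintegral_indicator measurableSet_Ioi, Measure.restrict_restrict measurableSet_Ioi,
          Ioi_inter_Ioi, sup_of_le_left (le_of_lt hs), lintegral_mul_const _ hk, mul_comm]

noncomputable def hardyOp (β : ℝ) (f : ℝ → ℝ) (y : ℝ) : ℝ :=
  y ^ (β - 1) * ∫ s in Ioo 0 y, f s * s ^ (-β)

lemma enorm_hardyOp_le (β : ℝ) (f : ℝ → ℝ) {y : ℝ} (hy : 0 < y) :
    ‖hardyOp β f y‖ₑ ≤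
      ENNReal.ofReal (y ^ (β - 1)) * ∫⁻ s in Ioo 0 y, ‖f s‖ₑ * ENNReal.ofReal (s ^ (-β)) := by
  rw [hardyOp, enorm_mul, Real.enorm_eq_ofReal (Real.rpow_nonneg hy.le _)]
  refine mul_le_mul_right ((enorm_integral_le_lintegral_enorm _).trans_eq ?_) _
  refine setLIntegral_congr_fun measurableSet_Ioo fun s hs => ?_
  rw [enorm_mul, Real.enorm_eq_ofReal (Real.rpow_nonneg hs.1.le _)]

lemma enorm_hardyOp_rpow_mul_le {p m β r : ℝ} (hp : 1 < p) (hr : r = 1 - β - (m + 1) / p)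
    (hr0 : 0 < r) {f : ℝ → ℝ} (hf : AEMeasurable f (volume.restrict (Ioi 0))) {y : ℝ}
    (hy : 0 < y) :
    ‖hardyOp β f y‖ₑ ^ p * ENNReal.ofReal (y ^ m) ≤
      ENNReal.ofReal r⁻¹ ^ (p - 1) * (ENNReal.ofReal (y ^ (-r - 1)) *
        ∫⁻ s in Ioo 0 y, ‖f s‖ₑ ^ p * ENNReal.ofReal (s ^ (m + r))) := by
  have hp0 : 0 < p := by linarith
  have hrp : r * p = (1 - β) * p - (m + 1) := by rw [hr]; field_simp
  have hfy : AEMeasurable (fun s => ‖f s‖ₑ * ENNReal.ofReal (s ^ (-β)))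
      (volume.restrict (Ioo 0 y)) :=
    (hf.mono_measure (Measure.restrict_mono Ioo_subset_Ioi_self le_rfl)).enorm.mul
      (measurable_ofReal_rpow _).aemeasurable
  have hintegrand : ∫⁻ s in Ioo 0 y, (‖f s‖ₑ * ENNReal.ofReal (s ^ (-β))) ^ p *
      ENNReal.ofReal (s ^ ((1 - r) * (p - 1))) =
      ∫⁻ s in Ioo 0 y, ‖f s‖ₑ ^ p * ENNReal.ofReal (s ^ (m + r)) := by
    refine setLIntegral_congr_fun measurableSet_Ioo fun s hs => ?_
    rw [ENNReal.mul_rpow_of_nonneg _ _ hp0.le, ofReal_rpow_rpow hs.1, mul_assoc,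
      ofReal_rpow_mul_ofReal_rpow hs.1]
    congr 3
    linear_combination -hrp
  have hweight : ENNReal.ofReal (y ^ (β - 1)) ^ p * ENNReal.ofReal (y ^ r / r) ^ (p - 1) *
      ENNReal.ofReal (y ^ m) = ENNReal.ofReal r⁻¹ ^ (p - 1) * ENNReal.ofReal (y ^ (-r - 1)) := by
    rw [div_eq_mul_inv, ENNReal.ofReal_mul (Real.rpow_nonneg hy.le _),
      ENNReal.mul_rpow_of_nonneg _ _ (by linarith), ofReal_rpow_rpow hy, ofReal_rpow_rpow hy]
    calc _ = ENNReal.ofReal r⁻¹ ^ (p - 1) * (ENNReal.ofReal (y ^ ((β - 1) * p)) *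
          ENNReal.ofReal (y ^ (r * (p - 1))) * ENNReal.ofReal (y ^ m)) := by ring
      _ = _ := by
        rw [ofReal_rpow_mul_ofReal_rpow hy, ofReal_rpow_mul_ofReal_rpow hy]
        congr 3
        linear_combination hrp
  calc ‖hardyOp β f y‖ₑ ^ p * ENNReal.ofReal (y ^ m)
      ≤ (ENNReal.ofReal (y ^ (β - 1)) *
          ∫⁻ s in Ioo 0 y, ‖f s‖ₑ * ENNReal.ofReal (s ^ (-β))) ^ p * ENNReal.ofReal (y ^ m) := by
        gcongr
        exact enorm_hardyOp_le β f hy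
    _ ≤ ENNReal.ofReal (y ^ (β - 1)) ^ p * (ENNReal.ofReal (y ^ r / r) ^ (p - 1) *
          ∫⁻ s in Ioo 0 y, ‖f s‖ₑ ^ p * ENNReal.ofReal (s ^ (m + r))) *
          ENNReal.ofReal (y ^ m) := by
        rw [ENNReal.mul_rpow_of_nonneg _ _ hp0.le, ← hintegrand]
        gcongr
        exact rpow_lintegral_Ioo_le hp hr0 hy hfy
    _ = _ := by
        rw [← mul_assoc, ← mul_assoc, mul_right_comm _ _ (ENNReal.ofReal _), hweight, mul_assoc]

lemma lintegral_enorm_hardyOp_rpow_le {p m β r : ℝ} (hp : 1 < p) (hr : r = 1 - β - (m + 1) / p)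
    (hr0 : 0 < r) {f : ℝ → ℝ} (hf : Measurable f) :
    ∫⁻ y in Ioi 0, ‖hardyOp β f y‖ₑ ^ p * ENNReal.ofReal (y ^ m) ≤
      ENNReal.ofReal r⁻¹ ^ p * ∫⁻ s in Ioi 0, ‖f s‖ₑ ^ p * ENNReal.ofReal (s ^ m) := by
  set K := ENNReal.ofReal r⁻¹
  have htail : ∀ s ∈ Ioi (0 : ℝ), ‖f s‖ₑ ^ p * ENNReal.ofReal (s ^ (m + r)) *
      ∫⁻ y in Ioi s, ENNReal.ofReal (y ^ (-r - 1)) = ‖f s‖ₑ ^ p * ENNReal.ofReal (s ^ m) * K := by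
    intro s hs
    rw [lintegral_Ioi_ofReal_rpow (by linarith) hs, sub_add_cancel, neg_neg, div_eq_mul_inv,
      ENNReal.ofReal_mul (Real.rpow_nonneg (le_of_lt hs) _), ← mul_assoc, mul_assoc (_ ^ p),
      ofReal_rpow_mul_ofReal_rpow hs, add_neg_cancel_right]
  calc ∫⁻ y in Ioi 0, ‖hardyOp β f y‖ₑ ^ p * ENNReal.ofReal (y ^ m)
      ≤ ∫⁻ y in Ioi 0, K ^ (p - 1) * (ENNReal.ofReal (y ^ (-r - 1)) *
          ∫⁻ s in Ioo 0 y, ‖f s‖ₑ ^ p * ENNReal.ofReal (s ^ (m + r))) :=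
        setLIntegral_mono' measurableSet_Ioi fun y hy =>
          enorm_hardyOp_rpow_mul_le hp hr hr0 hf.aemeasurable hy
    _ = K ^ (p - 1) * ∫⁻ s in Ioi 0, ‖f s‖ₑ ^ p * ENNReal.ofReal (s ^ m) * K := by
        rw [lintegral_const_mul' _ _
            (ENNReal.rpow_ne_top_of_nonneg (by linarith) ENNReal.ofReal_ne_top),
          lintegral_Ioi_mul_lintegral_Ioo (k := fun y => ENNReal.ofReal (y ^ (-r - 1)))
            (G := fun s => ‖f s‖ₑ ^ p * ENNReal.ofReal (s ^ (m + r)))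
            (measurable_ofReal_rpow _)
            ((hf.enorm.pow_const p).mul (measurable_ofReal_rpow _)),
          setLIntegral_congr_fun measurableSet_Ioi htail]
    _ = K ^ p * ∫⁻ s in Ioi 0, ‖f s‖ₑ ^ p * ENNReal.ofReal (s ^ m) := by
        have hK : K ^ (p - 1) * K = K ^ p := by
          conv_rhs => rw [← sub_add_cancel p 1]
          rw [ENNReal.rpow_add_of_nonneg _ _ (by linarith) zero_le_one, ENNReal.rpow_one]
        rw [lintegral_mul_const' _ _ ENNReal.ofReal_ne_top, mul_comm _ K, ← mul_assoc, hK]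

lemma eLpNorm_wm_eq {p : ℝ} (hp : 0 < p) (m : ℝ) (f : ℝ → ℝ) :
    eLpNorm f (ENNReal.ofReal p) (wm m) =
      (∫⁻ y in Ioi 0, ‖f y‖ₑ ^ p * ENNReal.ofReal (y ^ m)) ^ (1 / p) := by
  rw [eLpNorm_eq_lintegral_rpow_enorm_toReal (by simpa using hp) ENNReal.ofReal_ne_top,
    ENNReal.toReal_ofReal hp.le, wm, lintegral_withDensity_eq_lintegral_mul_non_measurable _
      (measurable_ofReal_rpow m) (ae_of_all _ fun _ => ENNReal.ofReal_lt_top)]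
  simp_rw [Pi.mul_apply, mul_comm (ENNReal.ofReal _)]

lemma restrict_Ioi_absolutelyContinuous_wm (m : ℝ) : volume.restrict (Ioi 0) ≪ wm m :=
  withDensity_absolutelyContinuous' (measurable_ofReal_rpow m).aemeasurable
    (ae_restrict_of_forall_mem measurableSet_Ioi fun _ hy =>
      (ENNReal.ofReal_pos.mpr (Real.rpow_pos_of_pos hy m)).ne')

lemma hardyOp_congr_ae (β : ℝ) {f g : ℝ → ℝ} (hfg : f =ᵐ[volume.restrict (Ioi 0)] g) :
    hardyOp β f = hardyOp β g := by
  ext y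
  rw [hardyOp, hardyOp, integral_congr_ae
    ((ae_restrict_of_ae_restrict_of_subset Ioo_subset_Ioi_self hfg).mono fun s hs => by rw [hs])]

lemma eLpNorm_hardyOp_le {p m β : ℝ} (hp : 1 < p) (h : (m + 1) / p < 1 - β) {f : ℝ → ℝ}
    (hf : Measurable f) :
    eLpNorm (hardyOp β f) (ENNReal.ofReal p) (wm m) ≤
      ENNReal.ofReal (1 - β - (m + 1) / p)⁻¹ * eLpNorm f (ENNReal.ofReal p) (wm m) := by
  have hp0 : 0 < p := by linarith
  rw [eLpNorm_wm_eq hp0, eLpNorm_wm_eq hp0]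
  calc _ ≤ (ENNReal.ofReal (1 - β - (m + 1) / p)⁻¹ ^ p *
        ∫⁻ s in Ioi 0, ‖f s‖ₑ ^ p * ENNReal.ofReal (s ^ m)) ^ (1 / p) := by
        gcongr
        exact lintegral_enorm_hardyOp_rpow_le hp rfl (by linarith) hf
    _ = _ := by
      rw [ENNReal.mul_rpow_of_nonneg _ _ (by positivity), ← ENNReal.rpow_mul,
        mul_one_div_cancel hp0.ne', ENNReal.rpow_one]

/-- Weighted Hardy inequality for `(H₁ f)(y) = y^{β-1} ∫_0^y f(s) s^{-β} ds`
when `(m+1)/p < 1-β`. -/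
theorem stmt4 (p m β : ℝ) (hp : 1 < p) (h : (m + 1) / p < 1 - β)
    (f : ℝ → ℝ) (hf : MemLp f (ENNReal.ofReal p) (wm m)) :
    eLpNorm (fun y => y ^ (β - 1) * ∫ s in Set.Ioo (0 : ℝ) y, f s * s ^ (-β))
        (ENNReal.ofReal p) (wm m) ≤
      ENNReal.ofReal |(m + 1) / p - (1 - β)|⁻¹ * eLpNorm f (ENNReal.ofReal p) (wm m) := by
  have hfg : f =ᵐ[wm m] hf.1.mk f := hf.1.ae_eq_mk
  have hH : hardyOp β f = hardyOp β (hf.1.mk f) :=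
    hardyOp_congr_ae β ((restrict_Ioi_absolutelyContinuous_wm m).ae_le hfg)
  rw [abs_of_neg (by linarith), neg_sub, eLpNorm_congr_ae hfg]
  change eLpNorm (hardyOp β f) _ _ ≤ _
  rw [hH]
  exact eLpNorm_hardyOp_le hp h hf.1.stronglyMeasurable_mk.measurable
end

section
/- Let $p > 1$, $m, \beta \in \mathbb{R}$ with $\frac{m+1}{p} < 1 - \beta$. Let $u \in W^{1,p}_{loc}((0,\infty))$ with $y^\beta u' \in L^p((0,\infty); y^m dy)$. Then the limit $u_0 := \lim_{y \to 0^+} u(y)$ exists and is finite, and $\|y^{\beta-1}(u - u_0)\|_{L^p((0,\infty); y^m dy)} \le C \|y^\beta u'\|_{L^p((0,\infty); y^m dy)}$ with $C = \left|\frac{m+1}{p} - (1-\beta)\right|^{-1}$. -/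
/-!
With `s = m + β p`, the hypothesis reads `s < p - 1`. A Hölder estimate with the weight
`t ^ ((1 - κ) (p - 1))` gives `(∫₀^y |u'|)^p ≤ (y^κ / κ)^(p-1) ∫₀^y |u'|^p t^((1-κ)(p-1))` for
every `κ > 0`; for `(1 - κ)(p - 1) = s` this shows `u' ∈ L¹(0, Y)`, so `u(y) - u₀ = ∫₀^y u'`
has a limit at `0`. For `κ = (p - 1 - s) / p`, multiplying by `y^(s-p)`, integrating in `y` and
exchanging the order of integration gives Hardy's inequality
`∫₀^∞ (∫₀^y |u'|)^p y^(s-p) dy ≤ κ^(-p) ∫₀^∞ |u'|^p t^s dt`, which is the claim.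
-/

open MeasureTheory Filter Set
open scoped ENNReal Topology

lemma lintegral_Ioc_zero_rpow {a : ℝ} (ha : -1 < a) {y : ℝ} (hy : 0 ≤ y) :
    ∫⁻ t in Ioc 0 y, ENNReal.ofReal (t ^ a) = ENNReal.ofReal (y ^ (a + 1) / (a + 1)) := by
  have hint : IntegrableOn (fun t : ℝ => t ^ a) (Ioc 0 y) :=
    (intervalIntegrable_iff_integrableOn_Ioc_of_le hy).1
      (intervalIntegral.intervalIntegrable_rpow' ha)
  rw [← ofReal_integral_eq_lintegral_ofReal hint
    ((ae_restrict_mem measurableSet_Ioc).mono fun t ht => Real.rpow_nonneg ht.1.le a),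
    ← intervalIntegral.integral_of_le hy, integral_rpow (Or.inl ha),
    Real.zero_rpow (by linarith), sub_zero]

lemma lintegral_Ioi_rpow {a : ℝ} (ha : a < -1) {t : ℝ} (ht : 0 < t) :
    ∫⁻ y in Ioi t, ENNReal.ofReal (y ^ a) = ENNReal.ofReal (-(t ^ (a + 1) / (a + 1))) := by
  rw [← ofReal_integral_eq_lintegral_ofReal (integrableOn_Ioi_rpow_of_lt ha ht)
    ((ae_restrict_mem measurableSet_Ioi).mono fun y hy => Real.rpow_nonneg (ht.trans hy).le a),
    integral_Ioi_rpow_of_lt ha ht, neg_div]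

lemma lintegral_Ioi_mul_lintegral_Ioc_comm {w h : ℝ → ℝ≥0∞} (hw : Measurable w)
    (hh : Measurable h) :
    ∫⁻ y in Ioi 0, w y * ∫⁻ t in Ioc 0 y, h t = ∫⁻ t in Ioi 0, h t * ∫⁻ y in Ioi t, w y := by
  set F : ℝ → ℝ → ℝ≥0∞ := fun y t => if t ≤ y then w y * h t else 0
  have hF : Measurable (Function.uncurry F) :=
    Measurable.ite (measurableSet_le measurable_snd measurable_fst)
      ((hw.comp measurable_fst).mul (hh.comp measurable_snd)) measurable_const
  have inner_t : ∀ y, w y * ∫⁻ t in Ioc 0 y, h t = ∫⁻ t in Ioi 0, F y t := by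
    intro y
    rw [← lintegral_const_mul _ hh, ← Iic_inter_Ioi, ← Measure.restrict_restrict measurableSet_Iic,
      ← lintegral_indicator measurableSet_Iic]
    rfl
  have inner_y : ∀ t ∈ Ioi (0 : ℝ), ∫⁻ y in Ioi 0, F y t = h t * ∫⁻ y in Ioi t, w y := by
    intro t ht
    rw [mul_comm, ← lintegral_mul_const _ hw, Measure.restrict_congr_set (Ioi_ae_eq_Ici (a := t)),
      ← inter_eq_left.2 (Ici_subset_Ioi.2 (mem_Ioi.1 ht)),
      ← Measure.restrict_restrict measurableSet_Ici, ← lintegral_indicator measurableSet_Ici]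
    rfl
  calc ∫⁻ y in Ioi 0, w y * ∫⁻ t in Ioc 0 y, h t
      = ∫⁻ y in Ioi 0, ∫⁻ t in Ioi 0, F y t := by simp_rw [inner_t]
    _ = ∫⁻ t in Ioi 0, ∫⁻ y in Ioi 0, F y t := lintegral_lintegral_swap hF.aemeasurable
    _ = ∫⁻ t in Ioi 0, h t * ∫⁻ y in Ioi t, w y := setLIntegral_congr_fun measurableSet_Ioi inner_y

lemma rpow_lintegral_Ioc_le {p κ y : ℝ} (hp : 1 < p) (hκ : 0 < κ) (hy : 0 ≤ y) {G : ℝ → ℝ≥0∞}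
    (hG : Measurable G) :
    (∫⁻ t in Ioc 0 y, G t) ^ p ≤
      ENNReal.ofReal (y ^ κ / κ) ^ (p - 1) *
        ∫⁻ t in Ioc 0 y, G t ^ p * ENNReal.ofReal (t ^ ((1 - κ) * (p - 1))) := by
  have hp0 : 0 < p := by linarith
  have hp1 : p - 1 ≠ 0 := by linarith
  set q := p / (p - 1)
  have hpq : p.HolderConjugate q := (Real.holderConjugate_iff_eq_conjExponent hp).mpr rfl
  set l := (1 - κ) * (p - 1) / p
  -- Hölder for `G t = (G t * t ^ l) * t ^ (-l)`; with this `l` the second factor integrates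
  -- to a pure power of `y`
  have holder : ∫⁻ t in Ioc 0 y, G t ≤
      (∫⁻ t in Ioc 0 y, (G t * ENNReal.ofReal (t ^ l)) ^ p) ^ (1 / p) *
        (∫⁻ t in Ioc 0 y, ENNReal.ofReal (t ^ (-l)) ^ q) ^ (1 / q) := by
    refine le_of_eq_of_le (setLIntegral_congr_fun measurableSet_Ioc fun t ht => ?_)
      (ENNReal.lintegral_mul_le_Lp_mul_Lq _ hpq (by fun_prop) (by fun_prop))
    rw [Pi.mul_apply, mul_assoc, ← ENNReal.ofReal_mul (Real.rpow_nonneg ht.1.le _),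
      ← Real.rpow_add ht.1, add_neg_cancel, Real.rpow_zero, ENNReal.ofReal_one, mul_one]
  have hG_factor : ∫⁻ t in Ioc 0 y, (G t * ENNReal.ofReal (t ^ l)) ^ p =
      ∫⁻ t in Ioc 0 y, G t ^ p * ENNReal.ofReal (t ^ ((1 - κ) * (p - 1))) := by
    refine setLIntegral_congr_fun measurableSet_Ioc fun t ht => ?_
    rw [ENNReal.mul_rpow_of_nonneg _ _ hp0.le, ENNReal.ofReal_rpow_of_nonneg
      (Real.rpow_nonneg ht.1.le _) hp0.le, ← Real.rpow_mul ht.1.le, div_mul_cancel₀ _ hp0.ne']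
  have hweight_factor : ∫⁻ t in Ioc 0 y, ENNReal.ofReal (t ^ (-l)) ^ q = ENNReal.ofReal (y ^ κ / κ) := by
    have hlq : -l * q = κ - 1 := by
      simp only [l, q]; field_simp; ring
    rw [← sub_add_cancel κ 1, ← lintegral_Ioc_zero_rpow (by linarith) hy, ← hlq]
    refine setLIntegral_congr_fun measurableSet_Ioc fun t ht => ?_
    rw [ENNReal.ofReal_rpow_of_nonneg (Real.rpow_nonneg ht.1.le _) hpq.symm.nonneg,
      ← Real.rpow_mul ht.1.le]
  rw [hG_factor, hweight_factor] at holder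
  calc (∫⁻ t in Ioc 0 y, G t) ^ p
      ≤ ((∫⁻ t in Ioc 0 y, G t ^ p * ENNReal.ofReal (t ^ ((1 - κ) * (p - 1)))) ^ (1 / p) *
          ENNReal.ofReal (y ^ κ / κ) ^ (1 / q)) ^ p := ENNReal.rpow_le_rpow holder hp0.le
    _ = _ := by
      rw [ENNReal.mul_rpow_of_nonneg _ _ hp0.le, ← ENNReal.rpow_mul, ← ENNReal.rpow_mul,
        one_div_mul_cancel hp0.ne', ENNReal.rpow_one, mul_comm]
      congr 2
      simp only [q]; field_simp

theorem lintegral_rpow_lintegral_Ioc_le {p s : ℝ} (hp : 1 < p) (hs : s < p - 1) {G : ℝ → ℝ≥0∞}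
    (hG : Measurable G) :
    ∫⁻ y in Ioi 0, (∫⁻ t in Ioc 0 y, G t) ^ p * ENNReal.ofReal (y ^ (s - p)) ≤
      ENNReal.ofReal (p / (p - 1 - s)) ^ p * ∫⁻ t in Ioi 0, G t ^ p * ENNReal.ofReal (t ^ s) := by
  have hp0 : 0 < p := by linarith
  set κ := (p - 1 - s) / p
  have hκ : 0 < κ := div_pos (by linarith) hp0
  set E := s - p + κ * (p - 1)
  set h : ℝ → ℝ≥0∞ := fun t => G t ^ p * ENNReal.ofReal (t ^ ((1 - κ) * (p - 1)))
  have hh : Measurable h := by fun_prop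
  have pointwise : ∀ y ∈ Ioi (0 : ℝ), (∫⁻ t in Ioc 0 y, G t) ^ p * ENNReal.ofReal (y ^ (s - p)) ≤
      ENNReal.ofReal (κ ^ (p - 1))⁻¹ * (ENNReal.ofReal (y ^ E) * ∫⁻ t in Ioc 0 y, h t) := by
    intro y (hy : 0 < y)
    have hweight : ENNReal.ofReal (y ^ κ / κ) ^ (p - 1) * ENNReal.ofReal (y ^ (s - p)) =
        ENNReal.ofReal (κ ^ (p - 1))⁻¹ * ENNReal.ofReal (y ^ E) := by
      simp only [E]
      rw [ENNReal.ofReal_rpow_of_nonneg (by positivity) (by linarith),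
        ← ENNReal.ofReal_mul (by positivity), ← ENNReal.ofReal_mul (by positivity),
        Real.div_rpow (by positivity) hκ.le, ← Real.rpow_mul hy.le, Real.rpow_add hy]
      congr 1
      ring
    calc (∫⁻ t in Ioc 0 y, G t) ^ p * ENNReal.ofReal (y ^ (s - p))
        ≤ ENNReal.ofReal (y ^ κ / κ) ^ (p - 1) * (∫⁻ t in Ioc 0 y, h t) *
            ENNReal.ofReal (y ^ (s - p)) :=
          mul_le_mul_left (rpow_lintegral_Ioc_le hp hκ hy.le hG) _
      _ = _ := by rw [mul_right_comm, hweight, mul_assoc]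
  have inner : ∀ t ∈ Ioi (0 : ℝ), h t * ∫⁻ y in Ioi t, ENNReal.ofReal (y ^ E) =
      ENNReal.ofReal κ⁻¹ * (G t ^ p * ENNReal.ofReal (t ^ s)) := by
    intro t (ht : 0 < t)
    have hE : E + 1 = -κ := by simp only [E, κ]; field_simp; ring
    have hs : (1 - κ) * (p - 1) + -κ = s := by simp only [κ]; field_simp; ring
    rw [lintegral_Ioi_rpow (by linarith) ht, hE, mul_assoc, mul_left_comm _ (G t ^ p),
      ← ENNReal.ofReal_mul (by positivity), ← ENNReal.ofReal_mul (by positivity), ← hs,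
      Real.rpow_add ht]
    congr 2
    field_simp
  calc ∫⁻ y in Ioi 0, (∫⁻ t in Ioc 0 y, G t) ^ p * ENNReal.ofReal (y ^ (s - p))
      ≤ ∫⁻ y in Ioi 0, ENNReal.ofReal (κ ^ (p - 1))⁻¹ *
          (ENNReal.ofReal (y ^ E) * ∫⁻ t in Ioc 0 y, h t) :=
        setLIntegral_mono' measurableSet_Ioi pointwise
    _ = ENNReal.ofReal (κ ^ (p - 1))⁻¹ *
          ∫⁻ t in Ioi 0, h t * ∫⁻ y in Ioi t, ENNReal.ofReal (y ^ E) := by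
      rw [lintegral_const_mul' _ _ ENNReal.ofReal_ne_top,
        lintegral_Ioi_mul_lintegral_Ioc_comm (by fun_prop) hh]
    _ = ENNReal.ofReal (κ ^ (p - 1))⁻¹ * ENNReal.ofReal κ⁻¹ *
          ∫⁻ t in Ioi 0, G t ^ p * ENNReal.ofReal (t ^ s) := by
      rw [setLIntegral_congr_fun measurableSet_Ioi inner,
        lintegral_const_mul' _ _ ENNReal.ofReal_ne_top, mul_assoc]
    _ = _ := by
      have hκinv : p / (p - 1 - s) = κ⁻¹ := by simp only [κ, inv_div]
      rw [hκinv, ENNReal.ofReal_rpow_of_nonneg (by positivity) hp0.le,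
        ← ENNReal.ofReal_mul (by positivity), ← Real.inv_rpow hκ.le,
        ← Real.rpow_add_one (by positivity), sub_add_cancel]

lemma ae_wm_pos (m : ℝ) : ∀ᵐ y ∂(wm m), 0 < y :=
  (withDensity_absolutelyContinuous _ _).ae_le (ae_restrict_mem measurableSet_Ioi)

lemma eLpNorm_wm_rpow_mul {p : ℝ} (hp : 0 < p) (m β : ℝ) (g : ℝ → ℝ) :
    eLpNorm (fun y => y ^ β * g y) (ENNReal.ofReal p) (wm m) =
      (∫⁻ y in Ioi 0, ‖g y‖ₑ ^ p * ENNReal.ofReal (y ^ (m + β * p))) ^ (1 / p) := by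
  rw [eLpNorm_eq_lintegral_rpow_enorm_toReal (by simpa using hp) ENNReal.ofReal_ne_top,
    ENNReal.toReal_ofReal hp.le, wm, lintegral_withDensity_eq_lintegral_mul_non_measurable _
      (by fun_prop : Measurable fun y : ℝ => ENNReal.ofReal (y ^ m))
      (ae_of_all _ fun _ => ENNReal.ofReal_lt_top)]
  congr 1
  refine setLIntegral_congr_fun measurableSet_Ioi fun y (hy : 0 < y) => ?_
  rw [Pi.mul_apply, enorm_mul, Real.enorm_of_nonneg (Real.rpow_nonneg hy.le _),
    ENNReal.mul_rpow_of_nonneg _ _ hp.le, ENNReal.ofReal_rpow_of_nonneg (Real.rpow_nonneg hy.le _)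
      hp.le, ← Real.rpow_mul hy.le, ← mul_assoc, ← ENNReal.ofReal_mul (Real.rpow_nonneg hy.le _),
    ← Real.rpow_add hy, mul_comm]

lemma add_mul_lt_sub_one_of_div_lt {p m β : ℝ} (hp : 0 < p) (h : (m + 1) / p < 1 - β) :
    m + β * p < p - 1 := by
  have := (div_lt_iff₀ hp).1 h
  nlinarith

theorem eLpNorm_wm_rpow_sub_one_mul_le {p m β : ℝ} (hp : 1 < p) (h : (m + 1) / p < 1 - β)
    {F g : ℝ → ℝ} (hg : Measurable g) (hF : ∀ y, 0 < y → ‖F y‖ₑ ≤ ∫⁻ t in Ioc 0 y, ‖g t‖ₑ) :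
    eLpNorm (fun y => y ^ (β - 1) * F y) (ENNReal.ofReal p) (wm m) ≤
      ENNReal.ofReal |(m + 1) / p - (1 - β)|⁻¹ *
        eLpNorm (fun y => y ^ β * g y) (ENNReal.ofReal p) (wm m) := by
  have hp0 : 0 < p := by linarith
  have hs := add_mul_lt_sub_one_of_div_lt hp0 h
  have hC : |(m + 1) / p - (1 - β)|⁻¹ = p / (p - 1 - (m + β * p)) := by
    have hneg : (m + 1) / p - (1 - β) = -((p - 1 - (m + β * p)) / p) := by field_simp; ring
    rw [hneg, abs_neg, abs_of_pos (div_pos (by linarith) hp0), inv_div]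
  have hexp : m + (β - 1) * p = m + β * p - p := by ring
  rw [eLpNorm_wm_rpow_mul hp0, eLpNorm_wm_rpow_mul hp0, hC, hexp]
  calc (∫⁻ y in Ioi 0, ‖F y‖ₑ ^ p * ENNReal.ofReal (y ^ (m + β * p - p))) ^ (1 / p)
      ≤ (∫⁻ y in Ioi 0, (∫⁻ t in Ioc 0 y, ‖g t‖ₑ) ^ p *
          ENNReal.ofReal (y ^ (m + β * p - p))) ^ (1 / p) := by
        refine ENNReal.rpow_le_rpow (setLIntegral_mono' measurableSet_Ioi fun y hy => ?_)
          (by positivity)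
        gcongr
        exact hF y hy
    _ ≤ (ENNReal.ofReal (p / (p - 1 - (m + β * p))) ^ p *
          ∫⁻ t in Ioi 0, ‖g t‖ₑ ^ p * ENNReal.ofReal (t ^ (m + β * p))) ^ (1 / p) := by
        gcongr
        exact lintegral_rpow_lintegral_Ioc_le hp hs hg.enorm
    _ = _ := by
        rw [ENNReal.mul_rpow_of_nonneg _ _ (by positivity), ← ENNReal.rpow_mul,
          mul_one_div_cancel hp0.ne', ENNReal.rpow_one]

lemma integrableOn_Ioc_of_memLp_wm {p m β : ℝ} (hp : 1 < p) (h : (m + 1) / p < 1 - β)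
    {g : ℝ → ℝ} (hg : Measurable g) (hmem : MemLp (fun y => y ^ β * g y) (ENNReal.ofReal p) (wm m))
    {Y : ℝ} (hY : 0 ≤ Y) : IntegrableOn g (Ioc 0 Y) := by
  have hp0 : 0 < p := by linarith
  have hs := add_mul_lt_sub_one_of_div_lt hp0 h
  set κ := (p - 1 - (m + β * p)) / (p - 1)
  have hκ : 0 < κ := div_pos (by linarith) (by linarith)
  have hκs : (1 - κ) * (p - 1) = m + β * p := by
    have : p - 1 ≠ 0 := by linarith
    simp only [κ]; field_simp; ring
  have hA : ∫⁻ t in Ioi 0, ‖g t‖ₑ ^ p * ENNReal.ofReal (t ^ (m + β * p)) < ⊤ := by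
    have := hmem.eLpNorm_lt_top
    rwa [eLpNorm_wm_rpow_mul hp0, ENNReal.rpow_lt_top_iff_of_pos (by positivity)] at this
  have hholder := rpow_lintegral_Ioc_le hp hκ hY hg.enorm
  rw [hκs] at hholder
  refine ⟨hg.aestronglyMeasurable, (ENNReal.rpow_lt_top_iff_of_pos hp0).1 (hholder.trans_lt ?_)⟩
  exact ENNReal.mul_lt_top (ENNReal.rpow_lt_top_of_nonneg (by linarith) ENNReal.ofReal_ne_top)
    ((lintegral_mono_set Ioc_subset_Ioi_self).trans_lt hA)

lemma exists_tendsto_nhdsGT_zero_of_hasDerivAt {u g : ℝ → ℝ}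
    (hderiv : ∀ y, 0 < y → HasDerivAt u (g y) y)
    (hint : ∀ Y, 0 < Y → IntervalIntegrable g volume 0 Y) :
    ∃ u₀, Tendsto u (𝓝[>] 0) (𝓝 u₀) ∧ ∀ y, 0 < y → u y - u₀ = ∫ t in 0..y, g t := by
  set u₀ := u 1 - ∫ t in 0..1, g t
  have hrep : ∀ y, 0 < y → u y - u₀ = ∫ t in 0..y, g t := by
    intro y hy
    have hftc : ∫ t in 1..y, g t = u y - u 1 :=
      intervalIntegral.integral_eq_sub_of_hasDerivAt
        (fun t ht => hderiv t (lt_of_lt_of_le (lt_min one_pos hy) ht.1))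
        ((hint 1 one_pos).symm.trans (hint y hy))
    rw [← intervalIntegral.integral_interval_sub_left (hint y hy) (hint 1 one_pos)] at hftc
    linarith
  have hprim : Tendsto (fun y => ∫ t in 0..y, g t) (𝓝[>] 0) (𝓝 0) := by
    have := (intervalIntegral.continuousOn_primitive_interval' (hint 1 one_pos)
      left_mem_uIcc 0 left_mem_uIcc).mono_of_mem_nhdsWithin
        (by rw [uIcc_of_le zero_le_one]; exact Icc_mem_nhdsGT one_pos)
    simpa using this.tendsto
  refine ⟨u₀, ?_, hrep⟩
  have hlim := (tendsto_const_nhds (x := u₀)).add hprim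
  rw [add_zero] at hlim
  exact hlim.congr' (eventually_nhdsWithin_of_forall fun y hy => by linarith [hrep y hy])

/-- Trace-Hardy inequality at `0`: if `(m+1)/p < 1-β` and `y^β u' ∈ L^p_m` then the trace
`u₀ = lim_{y→0⁺} u(y)` exists and `‖y^{β-1}(u-u₀)‖ ≤ C ‖y^β u'‖`. -/
theorem stmt6 (p m β : ℝ) (hp : 1 < p) (h : (m + 1) / p < 1 - β)
    (u u' : ℝ → ℝ) (hderiv : ∀ y, 0 < y → HasDerivAt u (u' y) y)
    (hmem : MemLp (fun y => y ^ β * u' y) (ENNReal.ofReal p) (wm m)) :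
    ∃ u₀ : ℝ, Tendsto u (𝓝[>] 0) (𝓝 u₀) ∧
      eLpNorm (fun y => y ^ (β - 1) * (u y - u₀)) (ENNReal.ofReal p) (wm m) ≤
        ENNReal.ofReal |(m + 1) / p - (1 - β)|⁻¹ *
          eLpNorm (fun y => y ^ β * u' y) (ENNReal.ofReal p) (wm m) := by
  -- `deriv u` is a Borel measurable representative of `u'` on `(0, ∞)`
  have hae : (fun y => y ^ β * deriv u y) =ᵐ[wm m] fun y => y ^ β * u' y := by
    filter_upwards [ae_wm_pos m] with y hy
    rw [(hderiv y hy).deriv]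
  have hint : ∀ Y, 0 < Y → IntervalIntegrable (deriv u) volume 0 Y := fun Y hY =>
    (intervalIntegrable_iff_integrableOn_Ioc_of_le hY.le).2
      (integrableOn_Ioc_of_memLp_wm hp h (measurable_deriv u) (hmem.ae_eq hae.symm) hY.le)
  obtain ⟨u₀, hlim, hrep⟩ := exists_tendsto_nhdsGT_zero_of_hasDerivAt
    (fun y hy => (hderiv y hy).differentiableAt.hasDerivAt) hint
  refine ⟨u₀, hlim, ?_⟩
  rw [← eLpNorm_congr_ae hae]
  refine eLpNorm_wm_rpow_sub_one_mul_le hp h (measurable_deriv u) fun y hy => ?_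
  rw [hrep y hy, intervalIntegral.integral_of_le hy.le]
  exact enorm_integral_le_lintegral_enorm _
end

section
/- Let $1 < p < \infty$, $m \in \mathbb{R}$, $\beta < 2$. There exist $C > 0$ and $\varepsilon_0 > 0$ such that for every $u \in W^{2,p}_{loc}((1,\infty))$ and every $0 < \varepsilon < \varepsilon_0$: $\|y^{\beta/2} u'\|_{L^p((1,\infty); y^m dy)} \le C\left(\varepsilon \|y^\beta u''\|_{L^p((1,\infty); y^m dy)} + \frac{1}{\varepsilon}\|u\|_{L^p((1,\infty); y^m dy)}\right)$. -/
open MeasureTheory Filter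
open scoped ENNReal

/-- The weighted measure `y^m dy` on `(1,∞)`. -/
noncomputable def wm1 (m : ℝ) : Measure ℝ :=
  (volume.restrict (Set.Ioi 1)).withDensity fun y => ENNReal.ofReal (y ^ m)

/-!
On a window `I = [y, y + ℓ]`, pick points `a`, `b` in the outer thirds of `I` where `|u|` is at
most its mean over that third; comparing `u b - u a` with `(b - a) u'(y)` gives the local estimate
`|u'(y)| ≤ 18 ℓ⁻² ∫_I |u| + ∫_I |u''|`. Take `ℓ = ε y ^ (β / 2)`, raise to the power `p` with
Hölder's inequality, multiply by the weight `y ^ (m + p β / 2)` and integrate over `y > 1`. After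
exchanging the order of integration, a point `t` lies in the window of `y` only for `y` in an
interval of length at most `2 ^ |β / 2| ε t ^ (β / 2)` on which `t / 2 ≤ y ≤ t` (for `β ≤ 2` and
`ε ≤ 1 / 2` the window of `y` has length at most `y / 2`), which turns the window integrals into the weighted norms of `u`
and `u''` with the factors `ε ^ (-p)` and `ε ^ p`.
-/

open Set intervalIntegral

lemma abs_sub_le_setIntegral_abs_deriv {f f' : ℝ → ℝ} {a b s : ℝ}
    (hf : ∀ t ∈ Icc a b, HasDerivAt f (f' t) t) (hf' : IntegrableOn f' (Icc a b))
    (hs : s ∈ Icc a b) : |f s - f a| ≤ ∫ t in Icc a b, |f' t| := by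
  have hsub : Icc a s ⊆ Icc a b := Icc_subset_Icc_right hs.2
  rw [← integral_eq_sub_of_hasDerivAt (fun t ht => hf t (hsub (uIcc_of_le hs.1 ▸ ht)))
    ((intervalIntegrable_iff_integrableOn_Icc_of_le hs.1).2 (hf'.mono_set hsub))]
  calc |∫ t in a..s, f' t| ≤ ∫ t in a..s, |f' t| := abs_integral_le_integral_abs hs.1
    _ = ∫ t in Ioc a s, |f' t| := integral_of_le hs.1
    _ ≤ ∫ t in Icc a b, |f' t| :=
      setIntegral_mono_set hf'.abs (ae_of_all _ fun _ => abs_nonneg _)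
        (Ioc_subset_Icc_self.trans hsub).eventuallyLE

lemma exists_mul_abs_le_setIntegral_abs {f : ℝ → ℝ} {c d : ℝ} (hcd : c < d)
    (hf : ContinuousOn f (Icc c d)) : ∃ a ∈ Icc c d, (d - c) * |f a| ≤ ∫ t in Icc c d, |f t| := by
  obtain ⟨a, ha, hle⟩ := exists_le_setAverage (μ := volume) (by simp [hcd])
    (by simp) (hf.abs.integrableOn_compact isCompact_Icc)
  refine ⟨a, ha, ?_⟩
  rw [setAverage_eq, Real.volume_real_Icc_of_le hcd.le, smul_eq_mul] at hle
  rwa [le_inv_mul_iff₀ (sub_pos.2 hcd)] at hle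

lemma lintegral_rpow_le_measure_rpow_mul {α : Type*} [MeasurableSpace α] {μ : Measure α}
    {s : Set α} {f : α → ℝ≥0∞} (hf : AEMeasurable f (μ.restrict s)) {p : ℝ} (hp : 1 ≤ p) :
    (∫⁻ x in s, f x ∂μ) ^ p ≤ μ s ^ (p - 1) * ∫⁻ x in s, f x ^ p ∂μ := by
  have h := eLpNorm'_le_eLpNorm'_mul_rpow_measure_univ one_pos hp hf.aestronglyMeasurable
  simp only [eLpNorm'_eq_lintegral_enorm, enorm_eq_self, ENNReal.rpow_one, div_one,
    Measure.restrict_apply_univ] at h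
  have hp0 : 0 ≤ p := zero_le_one.trans hp
  calc (∫⁻ x in s, f x ∂μ) ^ p
      ≤ ((∫⁻ x in s, f x ^ p ∂μ) ^ (1 / p) * μ s ^ (1 - 1 / p)) ^ p :=
        ENNReal.rpow_le_rpow h hp0
    _ = μ s ^ (p - 1) * ∫⁻ x in s, f x ^ p ∂μ := by
        rw [ENNReal.mul_rpow_of_nonneg _ _ hp0, ← ENNReal.rpow_mul, ← ENNReal.rpow_mul,
          one_div_mul_cancel (by positivity), ENNReal.rpow_one, mul_comm, sub_mul,
          one_div_mul_cancel (by positivity), one_mul]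

lemma le_add_of_rpow_le_rpow_add_rpow {x a b : ℝ≥0∞} {p : ℝ} (hp : 1 ≤ p)
    (h : x ^ p ≤ a ^ p + b ^ p) : x ≤ a + b :=
  (ENNReal.rpow_le_rpow_iff (by linarith)).1 (h.trans (ENNReal.add_rpow_le_rpow_add _ _ hp))

lemma rpow_le_two_rpow_abs_mul_rpow {y t : ℝ} (r : ℝ) (hy : 0 < y) (hty : t ≤ 2 * y)
    (hyt : y ≤ t) : y ^ r ≤ 2 ^ |r| * t ^ r := by
  rcases le_or_gt 0 r with hr | hr
  · calc y ^ r ≤ t ^ r := Real.rpow_le_rpow hy.le hyt hr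
      _ ≤ 2 ^ |r| * t ^ r := le_mul_of_one_le_left (Real.rpow_nonneg (by linarith) r)
          (Real.one_le_rpow one_le_two (abs_nonneg r))
  · calc y ^ r ≤ (t / 2) ^ r := Real.rpow_le_rpow_of_nonpos (by linarith) (by linarith) hr.le
      _ = 2 ^ |r| * t ^ r := by
          rw [Real.div_rpow (by linarith) zero_le_two, abs_of_neg hr, Real.rpow_neg zero_le_two,
            div_eq_inv_mul]

lemma rpow_mul_mul_rpow_rpow {ε y : ℝ} (hε : 0 ≤ ε) (hy : 0 < y) (a b s : ℝ) :
    y ^ a * (ε * y ^ b) ^ s = ε ^ s * y ^ (a + b * s) := by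
  rw [Real.mul_rpow hε (by positivity), ← Real.rpow_mul hy.le, Real.rpow_add hy]
  ring

section

variable {u u' u'' : ℝ → ℝ}

lemma sub_mul_abs_deriv_le {y z a b : ℝ}
    (hu : ∀ t ∈ Icc y z, HasDerivAt u (u' t) t) (hu' : ∀ t ∈ Icc y z, HasDerivAt u' (u'' t) t)
    (hu'' : IntegrableOn u'' (Icc y z)) (ha : a ∈ Icc y z) (hb : b ∈ Icc y z) (hab : a ≤ b) :
    (b - a) * |u' y| ≤ |u a| + |u b| + (b - a) * ∫ t in Icc y z, |u'' t| := by
  set M := ∫ t in Icc y z, |u'' t|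
  have hsub : Icc a b ⊆ Icc y z := Icc_subset_Icc ha.1 hb.2
  have hcont : ContinuousOn u' (Icc a b) := fun t ht =>
    (hu' t (hsub ht)).continuousAt.continuousWithinAt
  have ftc : ∫ s in a..b, u' s = u b - u a :=
    integral_eq_sub_of_hasDerivAt (fun t ht => hu t (hsub (uIcc_of_le hab ▸ ht)))
      (hcont.intervalIntegrable_of_Icc hab)
  have hdev : ∀ s ∈ uIoc a b, ‖u' s - u' y‖ ≤ M := fun s hs => by
    rw [uIoc_of_le hab] at hs
    exact abs_sub_le_setIntegral_abs_deriv hu' hu'' (hsub ⟨hs.1.le, hs.2⟩)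
  have key := norm_integral_le_of_norm_le_const hdev
  rw [integral_sub (hcont.intervalIntegrable_of_Icc hab) intervalIntegrable_const, ftc,
    intervalIntegral.integral_const, smul_eq_mul, Real.norm_eq_abs,
    abs_of_nonneg (sub_nonneg.2 hab)] at key
  calc (b - a) * |u' y| = |(u b - u a) - (u b - u a - (b - a) * u' y)| := by
        rw [sub_sub_cancel, abs_mul, abs_of_nonneg (sub_nonneg.2 hab)]
    _ ≤ |u b - u a| + |u b - u a - (b - a) * u' y| := abs_sub _ _
    _ ≤ |u b| + |u a| + M * (b - a) := add_le_add (abs_sub _ _) key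
    _ = |u a| + |u b| + (b - a) * M := by ring

lemma abs_deriv_le_window {y ℓ : ℝ} (hℓ : 0 < ℓ)
    (hu : ∀ t ∈ Icc y (y + ℓ), HasDerivAt u (u' t) t)
    (hu' : ∀ t ∈ Icc y (y + ℓ), HasDerivAt u' (u'' t) t)
    (hu'' : IntegrableOn u'' (Icc y (y + ℓ))) :
    |u' y| ≤ 18 / ℓ ^ 2 * (∫ t in Icc y (y + ℓ), |u t|) + ∫ t in Icc y (y + ℓ), |u'' t| := by
  set J := ∫ t in Icc y (y + ℓ), |u t|
  set M := ∫ t in Icc y (y + ℓ), |u'' t|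
  have hcont : ContinuousOn u (Icc y (y + ℓ)) := fun t ht =>
    (hu t ht).continuousAt.continuousWithinAt
  have third : ∀ c, y ≤ c → c + ℓ / 3 ≤ y + ℓ →
      ∃ a ∈ Icc c (c + ℓ / 3), ℓ / 3 * |u a| ≤ J := fun c hc hc' => by
    have hsub : Icc c (c + ℓ / 3) ⊆ Icc y (y + ℓ) := Icc_subset_Icc hc hc'
    obtain ⟨a, ha, hle⟩ := exists_mul_abs_le_setIntegral_abs (by linarith) (hcont.mono hsub)
    refine ⟨a, ha, ?_⟩
    rw [add_sub_cancel_left] at hle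
    exact hle.trans (setIntegral_mono_set (hcont.abs.integrableOn_compact isCompact_Icc)
      (ae_of_all _ fun _ => abs_nonneg _) hsub.eventuallyLE)
  obtain ⟨a, ha, hua⟩ := third y le_rfl (by linarith)
  obtain ⟨b, hb, hub⟩ := third (y + 2 * ℓ / 3) (by linarith) (by linarith)
  have hab : ℓ / 3 ≤ b - a := by linarith [ha.2, hb.1]
  have key := sub_mul_abs_deriv_le (a := a) (b := b) hu hu' hu''
    ⟨ha.1, by linarith [ha.2]⟩ ⟨by linarith [hb.1], by linarith [hb.2]⟩ (by linarith)
  -- `(b - a) (|u' y| - M) ≤ |u a| + |u b| ≤ 6 J / ℓ` with `b - a ≥ ℓ / 3`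
  have hJ : 0 ≤ J := setIntegral_nonneg measurableSet_Icc fun _ _ => abs_nonneg _
  rw [← sub_le_iff_le_add, div_mul_eq_mul_div, le_div_iff₀ (by positivity)]
  rcases le_or_gt (|u' y| - M) 0 with h | h
  · nlinarith
  · nlinarith [mul_le_mul_of_nonneg_right hab h.le]

lemma enorm_deriv_le_window {y ℓ : ℝ} (hℓ : 0 < ℓ)
    (hu : ∀ t ∈ Icc y (y + ℓ), HasDerivAt u (u' t) t)
    (hu' : ∀ t ∈ Icc y (y + ℓ), HasDerivAt u' (u'' t) t) :
    ‖u' y‖ₑ ≤ ENNReal.ofReal (18 / ℓ ^ 2) * (∫⁻ t in Icc y (y + ℓ), ‖u t‖ₑ) +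
      ∫⁻ t in Icc y (y + ℓ), ‖u'' t‖ₑ := by
  by_cases htop : ∫⁻ t in Icc y (y + ℓ), ‖u'' t‖ₑ = ∞
  · rw [htop, add_top]
    exact le_top
  have hu''_int : IntegrableOn u'' (Icc y (y + ℓ)) := by
    refine ⟨(measurable_deriv u').aestronglyMeasurable.congr ?_, lt_top_iff_ne_top.2 htop⟩
    exact ae_restrict_of_forall_mem measurableSet_Icc fun t ht => (hu' t ht).deriv
  have hu_int : IntegrableOn u (Icc y (y + ℓ)) :=
    ContinuousOn.integrableOn_compact isCompact_Icc fun t ht =>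
      (hu t ht).continuousAt.continuousWithinAt
  rw [← ofReal_integral_norm_eq_lintegral_enorm hu_int,
    ← ofReal_integral_norm_eq_lintegral_enorm hu''_int, ← ofReal_norm]
  simp only [Real.norm_eq_abs]
  rw [← ENNReal.ofReal_mul (by positivity), ← ENNReal.ofReal_add (by positivity)
    (integral_nonneg fun _ => abs_nonneg _)]
  exact ENNReal.ofReal_le_ofReal (abs_deriv_le_window hℓ hu hu' hu''_int)

lemma enorm_deriv_rpow_le_window {y ℓ p : ℝ} (hℓ : 0 < ℓ) (hp : 1 ≤ p)
    (hu : ∀ t ∈ Icc y (y + ℓ), HasDerivAt u (u' t) t)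
    (hu' : ∀ t ∈ Icc y (y + ℓ), HasDerivAt u' (u'' t) t) :
    ‖u' y‖ₑ ^ p ≤ ENNReal.ofReal (2 ^ (p - 1) * 18 ^ p * ℓ ^ (-(p + 1))) *
        (∫⁻ t in Icc y (y + ℓ), ‖u t‖ₑ ^ p) +
      ENNReal.ofReal (2 ^ (p - 1) * ℓ ^ (p - 1)) * ∫⁻ t in Icc y (y + ℓ), ‖u'' t‖ₑ ^ p := by
  have hp0 : 0 ≤ p := zero_le_one.trans hp
  have hvol : volume (Icc y (y + ℓ)) ^ (p - 1) = ENNReal.ofReal (ℓ ^ (p - 1)) := by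
    rw [Real.volume_Icc, add_sub_cancel_left, ENNReal.ofReal_rpow_of_pos hℓ]
  have holder_u := lintegral_rpow_le_measure_rpow_mul (μ := volume) (s := Icc y (y + ℓ))
    (f := fun t => ‖u t‖ₑ) (ContinuousOn.aestronglyMeasurable (fun t ht =>
      (hu t ht).continuousAt.continuousWithinAt) measurableSet_Icc).enorm hp
  have holder_u'' := lintegral_rpow_le_measure_rpow_mul (μ := volume) (s := Icc y (y + ℓ))
    (f := fun t => ‖u'' t‖ₑ) ((measurable_deriv u').enorm.aemeasurable.congr
      (ae_restrict_of_forall_mem measurableSet_Icc fun t ht => congrArg enorm (hu' t ht).deriv)) hp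
  rw [hvol] at holder_u holder_u''
  have hcoeff : (18 / ℓ ^ 2) ^ p * ℓ ^ (p - 1) = 18 ^ p * ℓ ^ (-(p + 1)) := by
    rw [Real.div_rpow (by norm_num) (by positivity), ← Real.rpow_natCast, ← Real.rpow_mul hℓ.le,
      div_mul_eq_mul_div, mul_div_assoc, ← Real.rpow_sub hℓ]
    push_cast
    ring_nf
  calc ‖u' y‖ₑ ^ p
      ≤ (ENNReal.ofReal (18 / ℓ ^ 2) * (∫⁻ t in Icc y (y + ℓ), ‖u t‖ₑ) +
          ∫⁻ t in Icc y (y + ℓ), ‖u'' t‖ₑ) ^ p :=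
        ENNReal.rpow_le_rpow (enorm_deriv_le_window hℓ hu hu') hp0
    _ ≤ 2 ^ (p - 1) * ((ENNReal.ofReal (18 / ℓ ^ 2) * ∫⁻ t in Icc y (y + ℓ), ‖u t‖ₑ) ^ p +
          (∫⁻ t in Icc y (y + ℓ), ‖u'' t‖ₑ) ^ p) :=
        ENNReal.rpow_add_le_mul_rpow_add_rpow _ _ hp
    _ ≤ 2 ^ (p - 1) * (ENNReal.ofReal (18 / ℓ ^ 2) ^ p *
            (ENNReal.ofReal (ℓ ^ (p - 1)) * ∫⁻ t in Icc y (y + ℓ), ‖u t‖ₑ ^ p) +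
          ENNReal.ofReal (ℓ ^ (p - 1)) * ∫⁻ t in Icc y (y + ℓ), ‖u'' t‖ₑ ^ p) := by
        rw [ENNReal.mul_rpow_of_nonneg _ _ hp0]
        gcongr
    _ = _ := by
        have h2 : (2 : ℝ≥0∞) ^ (p - 1) = ENNReal.ofReal (2 ^ (p - 1)) := by
          rw [← ENNReal.ofReal_rpow_of_pos two_pos, ENNReal.ofReal_ofNat]
        rw [ENNReal.ofReal_rpow_of_pos (by positivity), h2, ← mul_assoc,
          ← ENNReal.ofReal_mul (by positivity),
          mul_add, ← mul_assoc, ← mul_assoc, ← ENNReal.ofReal_mul (by positivity),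
          ← ENNReal.ofReal_mul (by positivity), mul_assoc (2 ^ (p - 1)), hcoeff]

lemma rpow_mul_enorm_deriv_rpow_le_window {p m β ε y : ℝ} (hp : 1 ≤ p)
    (hε : 0 < ε) (hy : 0 < y)
    (hu : ∀ t ∈ Icc y (y + ε * y ^ (β / 2)), HasDerivAt u (u' t) t)
    (hu' : ∀ t ∈ Icc y (y + ε * y ^ (β / 2)), HasDerivAt u' (u'' t) t) :
    ENNReal.ofReal (y ^ (m + p * (β / 2))) * ‖u' y‖ₑ ^ p ≤
      ENNReal.ofReal (2 ^ (p - 1) * 18 ^ p * ε ^ (-(p + 1))) * (ENNReal.ofReal (y ^ (m - β / 2)) *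
          ∫⁻ t in Icc y (y + ε * y ^ (β / 2)), ‖u t‖ₑ ^ p) +
        ENNReal.ofReal (2 ^ (p - 1) * ε ^ (p - 1)) * (ENNReal.ofReal (y ^ (m + p * β - β / 2)) *
          ∫⁻ t in Icc y (y + ε * y ^ (β / 2)), ‖u'' t‖ₑ ^ p) := by
  have h1 : y ^ (m + p * (β / 2)) * (2 ^ (p - 1) * 18 ^ p * (ε * y ^ (β / 2)) ^ (-(p + 1))) =
      2 ^ (p - 1) * 18 ^ p * ε ^ (-(p + 1)) * y ^ (m - β / 2) := by
    rw [mul_left_comm, rpow_mul_mul_rpow_rpow hε.le hy]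
    ring_nf
  have h2 : y ^ (m + p * (β / 2)) * (2 ^ (p - 1) * (ε * y ^ (β / 2)) ^ (p - 1)) =
      2 ^ (p - 1) * ε ^ (p - 1) * y ^ (m + p * β - β / 2) := by
    rw [mul_left_comm, rpow_mul_mul_rpow_rpow hε.le hy]
    ring_nf
  calc ENNReal.ofReal (y ^ (m + p * (β / 2))) * ‖u' y‖ₑ ^ p
      ≤ ENNReal.ofReal (y ^ (m + p * (β / 2))) *
          (ENNReal.ofReal (2 ^ (p - 1) * 18 ^ p * (ε * y ^ (β / 2)) ^ (-(p + 1))) *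
              (∫⁻ t in Icc y (y + ε * y ^ (β / 2)), ‖u t‖ₑ ^ p) +
            ENNReal.ofReal (2 ^ (p - 1) * (ε * y ^ (β / 2)) ^ (p - 1)) *
              ∫⁻ t in Icc y (y + ε * y ^ (β / 2)), ‖u'' t‖ₑ ^ p) := by
        gcongr
        exact enorm_deriv_rpow_le_window (by positivity) hp hu hu'
    _ = _ := by
        rw [mul_add, ← mul_assoc, ← mul_assoc, ← ENNReal.ofReal_mul (by positivity),
          ← ENNReal.ofReal_mul (by positivity), h1, h2,
          ENNReal.ofReal_mul' (q := y ^ (m - β / 2)) (by positivity),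
          ENNReal.ofReal_mul' (q := y ^ (m + p * β - β / 2)) (by positivity)]
        ring

def windowRegion (h : ℝ → ℝ) : Set (ℝ × ℝ) := {z | z.2 ∈ Icc z.1 (h z.1)}

lemma measurableSet_windowRegion {h : ℝ → ℝ} (hh : Measurable h) :
    MeasurableSet (windowRegion h) :=
  (measurableSet_le measurable_fst measurable_snd).inter
    (measurableSet_le measurable_snd (hh.comp measurable_fst))

lemma indicator_Icc_eq_indicator_windowRegion (h : ℝ → ℝ) (f : ℝ → ℝ≥0∞) (y t : ℝ) :
    (Icc y (h y)).indicator f t = (windowRegion h).indicator (fun z => f z.2) (y, t) := by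
  simp only [indicator_apply, windowRegion, mem_ofPred_eq]

lemma measurable_lintegral_Icc {h : ℝ → ℝ} (hh : Measurable h) {G : ℝ → ℝ≥0∞}
    (hG : Measurable G) : Measurable fun y => ∫⁻ t in Icc y (h y), G t := by
  simp_rw [← lintegral_indicator measurableSet_Icc, indicator_Icc_eq_indicator_windowRegion]
  exact ((hG.comp measurable_snd).indicator (measurableSet_windowRegion hh)).lintegral_prod_right'

lemma setLIntegral_mul_lintegral_Icc_eq {s : Set ℝ} {w : ℝ → ℝ≥0∞} {h : ℝ → ℝ}
    {G : ℝ → ℝ≥0∞} (hw : Measurable w) (hh : Measurable h) (hG : Measurable G) :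
    ∫⁻ y in s, w y * ∫⁻ t in Icc y (h y), G t =
      ∫⁻ t, G t * ∫⁻ y in {y | t ∈ Icc y (h y)} ∩ s, w y := by
  set F : ℝ × ℝ → ℝ≥0∞ := (windowRegion h).indicator fun z => w z.1 * G z.2
  have hF : Measurable F := ((hw.comp measurable_fst).mul (hG.comp measurable_snd)).indicator
    (measurableSet_windowRegion hh)
  calc ∫⁻ y in s, w y * ∫⁻ t in Icc y (h y), G t
      = ∫⁻ y in s, ∫⁻ t, F (y, t) := by
        refine lintegral_congr fun y => ?_
        rw [← lintegral_const_mul _ hG, ← lintegral_indicator measurableSet_Icc]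
        simp only [F, indicator_apply, windowRegion, mem_ofPred_eq]
    _ = ∫⁻ t, ∫⁻ y in s, F (y, t) := lintegral_lintegral_swap hF.aemeasurable
    _ = ∫⁻ t, G t * ∫⁻ y in {y | t ∈ Icc y (h y)} ∩ s, w y := by
        refine lintegral_congr fun t => ?_
        have hT : MeasurableSet {y | t ∈ Icc y (h y)} :=
          (measurableSet_le measurable_id measurable_const).inter
            (measurableSet_le measurable_const hh)
        rw [← Measure.restrict_restrict hT, ← lintegral_indicator hT, ← lintegral_const_mul _
          (hw.indicator hT)]
        refine lintegral_congr fun y => ?_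
        simp only [F, indicator_apply, windowRegion, mem_ofPred_eq, mul_ite, mul_zero, mul_comm]

lemma le_two_mul_of_le_add_mul_rpow {β ε y t : ℝ} (hβ : β ≤ 2) (hε : ε ≤ 1 / 2) (hy : 1 ≤ y)
    (ht : t ≤ y + ε * y ^ (β / 2)) : t ≤ 2 * y := by
  have : y ^ (β / 2) ≤ y := by
    simpa using Real.rpow_le_rpow_of_exponent_le hy (show β / 2 ≤ 1 by linarith)
  nlinarith [Real.rpow_nonneg (zero_le_one.trans hy) (β / 2)]

lemma setLIntegral_rpow_window_le {β ε t : ℝ} (r : ℝ) (hβ : β ≤ 2) (hε : 0 ≤ ε) (hε' : ε ≤ 1 / 2)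
    (ht : 1 < t) :
    ∫⁻ y in {y | t ∈ Icc y (y + ε * y ^ (β / 2))} ∩ Ioi 1, ENNReal.ofReal (y ^ r) ≤
      ENNReal.ofReal (2 ^ (|r| + |β / 2|) * ε * t ^ (r + β / 2)) := by
  set T := {y | t ∈ Icc y (y + ε * y ^ (β / 2))} ∩ Ioi 1
  have hT : MeasurableSet T :=
    ((measurableSet_le measurable_id measurable_const).inter (measurableSet_le measurable_const
      (by fun_prop : Measurable fun y : ℝ => y + ε * y ^ (β / 2)))).inter measurableSet_Ioi
  have hmem : ∀ y ∈ T, 0 < y ∧ t ≤ 2 * y ∧ y ≤ t ∧ t - y ≤ ε * y ^ (β / 2) :=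
    fun y ⟨⟨hyt, hty⟩, hy⟩ => ⟨by linarith [mem_Ioi.1 hy],
      le_two_mul_of_le_add_mul_rpow hβ hε' (le_of_lt hy) hty, hyt, by linarith⟩
  have hTsub : T ⊆ Icc (t - ε * (2 ^ |β / 2| * t ^ (β / 2))) t := fun y hy => by
    obtain ⟨hy0, h2, hyt, hlen⟩ := hmem y hy
    have := rpow_le_two_rpow_abs_mul_rpow (β / 2) hy0 h2 hyt
    exact ⟨by nlinarith, hyt⟩
  calc ∫⁻ y in T, ENNReal.ofReal (y ^ r)
      ≤ ∫⁻ _ in T, ENNReal.ofReal (2 ^ |r| * t ^ r) := setLIntegral_mono' hT fun y hy => by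
        obtain ⟨hy0, h2, hyt, -⟩ := hmem y hy
        exact ENNReal.ofReal_le_ofReal (rpow_le_two_rpow_abs_mul_rpow r hy0 h2 hyt)
    _ = ENNReal.ofReal (2 ^ |r| * t ^ r) * volume T := setLIntegral_const _ _
    _ ≤ ENNReal.ofReal (2 ^ |r| * t ^ r) * ENNReal.ofReal (ε * (2 ^ |β / 2| * t ^ (β / 2))) := by
        gcongr
        exact (measure_mono hTsub).trans_eq (by rw [Real.volume_Icc, sub_sub_cancel])
    _ = ENNReal.ofReal (2 ^ (|r| + |β / 2|) * ε * t ^ (r + β / 2)) := by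
        rw [← ENNReal.ofReal_mul (by positivity), Real.rpow_add two_pos,
          Real.rpow_add (by linarith)]
        ring_nf

lemma setLIntegral_rpow_mul_lintegral_window_le {β ε : ℝ} (r : ℝ) (hβ : β ≤ 2) (hε : 0 ≤ ε)
    (hε' : ε ≤ 1 / 2) {G : ℝ → ℝ≥0∞} (hG : Measurable G) :
    ∫⁻ y in Ioi 1, ENNReal.ofReal (y ^ r) * ∫⁻ t in Icc y (y + ε * y ^ (β / 2)), G t ≤
      ENNReal.ofReal (2 ^ (|r| + |β / 2|) * ε) *
        ∫⁻ t in Ioi 1, ENNReal.ofReal (t ^ (r + β / 2)) * G t := by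
  rw [setLIntegral_mul_lintegral_Icc_eq (by fun_prop) (by fun_prop) hG,
    ← lintegral_const_mul _ (by fun_prop)]
  have hsupp : (Function.support fun t =>
      G t * ∫⁻ y in {y | t ∈ Icc y (y + ε * y ^ (β / 2))} ∩ Ioi 1, ENNReal.ofReal (y ^ r)) ⊆
        Ioi 1 := by
    refine Function.support_subset_iff'.2 fun t ht => ?_
    have : {y | t ∈ Icc y (y + ε * y ^ (β / 2))} ∩ Ioi 1 = ∅ :=
      eq_empty_of_forall_notMem fun y ⟨⟨hyt, _⟩, hy⟩ => ht (lt_of_lt_of_le hy hyt)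
    rw [this, Measure.restrict_empty, lintegral_zero_measure, mul_zero]
  rw [← setLIntegral_eq_of_support_subset hsupp]
  refine setLIntegral_mono' measurableSet_Ioi fun t ht => ?_
  calc G t * ∫⁻ y in {y | t ∈ Icc y (y + ε * y ^ (β / 2))} ∩ Ioi 1, ENNReal.ofReal (y ^ r)
      ≤ G t * ENNReal.ofReal (2 ^ (|r| + |β / 2|) * ε * t ^ (r + β / 2)) := by
        gcongr
        exact setLIntegral_rpow_window_le r hβ hε hε' ht
    _ = _ := by
        rw [ENNReal.ofReal_mul (by positivity), mul_comm, mul_assoc]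

lemma setLIntegral_rpow_mul_enorm_deriv_rpow_le_window {p m β ε : ℝ} (hp : 1 ≤ p)
    (hε : 0 < ε) (hu_meas : Measurable u) (hu''_meas : Measurable u'')
    (hu : ∀ y, 1 < y → HasDerivAt u (u' y) y) (hu' : ∀ y, 1 < y → HasDerivAt u' (u'' y) y) :
    ∫⁻ y in Ioi 1, ENNReal.ofReal (y ^ (m + p * (β / 2))) * ‖u' y‖ₑ ^ p ≤
      ENNReal.ofReal (2 ^ (p - 1) * 18 ^ p * ε ^ (-(p + 1))) *
          (∫⁻ y in Ioi 1, ENNReal.ofReal (y ^ (m - β / 2)) *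
            ∫⁻ t in Icc y (y + ε * y ^ (β / 2)), ‖u t‖ₑ ^ p) +
        ENNReal.ofReal (2 ^ (p - 1) * ε ^ (p - 1)) *
          ∫⁻ y in Ioi 1, ENNReal.ofReal (y ^ (m + p * β - β / 2)) *
            ∫⁻ t in Icc y (y + ε * y ^ (β / 2)), ‖u'' t‖ₑ ^ p := by
  have hmeas : ∀ (r : ℝ) {f : ℝ → ℝ}, Measurable f → Measurable fun y =>
      ENNReal.ofReal (y ^ r) * ∫⁻ t in Icc y (y + ε * y ^ (β / 2)), ‖f t‖ₑ ^ p := fun r f hf =>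
    (by fun_prop : Measurable fun y : ℝ => ENNReal.ofReal (y ^ r)).mul
      (measurable_lintegral_Icc (by fun_prop) (hf.enorm.pow_const p))
  rw [← lintegral_const_mul _ (hmeas _ hu_meas), ← lintegral_const_mul _ (hmeas _ hu''_meas),
    ← lintegral_add_left ((hmeas _ hu_meas).const_mul _)]
  exact setLIntegral_mono' measurableSet_Ioi fun y hy =>
    rpow_mul_enorm_deriv_rpow_le_window hp hε (zero_lt_one.trans hy)
      (fun t ht => hu t (lt_of_lt_of_le hy ht.1)) (fun t ht => hu' t (lt_of_lt_of_le hy ht.1))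

/-- `C ^ p` for the interpolation inequality: `18` comes from the local estimate, `2 ^ (p - 1)`
from convexity of `x ↦ x ^ p`, and `2 ^ (|r| + |β / 2|)`, for the two weight exponents `r`, from
comparing `y` with `t ∈ [y, y + ε y ^ (β / 2)]`. -/
noncomputable def weightedInterpConst (p m β : ℝ) : ℝ :=
  2 ^ (p - 1) * (18 ^ p * 2 ^ (|m - β / 2| + |β / 2|) + 2 ^ (|m + p * β - β / 2| + |β / 2|))

lemma setLIntegral_rpow_mul_enorm_deriv_rpow_le {p m β ε : ℝ} (hp : 1 ≤ p)
    (hβ : β ≤ 2) (hε : 0 < ε) (hε' : ε ≤ 1 / 2) (hu_meas : Measurable u)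
    (hu''_meas : Measurable u'') (hu : ∀ y, 1 < y → HasDerivAt u (u' y) y)
    (hu' : ∀ y, 1 < y → HasDerivAt u' (u'' y) y) :
    ∫⁻ y in Ioi 1, ENNReal.ofReal (y ^ (m + p * (β / 2))) * ‖u' y‖ₑ ^ p ≤
      ENNReal.ofReal (weightedInterpConst p m β * ε ^ p) *
          (∫⁻ y in Ioi 1, ENNReal.ofReal (y ^ (m + p * β)) * ‖u'' y‖ₑ ^ p) +
        ENNReal.ofReal (weightedInterpConst p m β * ε ^ (-p)) *
          ∫⁻ y in Ioi 1, ENNReal.ofReal (y ^ m) * ‖u y‖ₑ ^ p := by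
  set K₁ : ℝ := 2 ^ (|m - β / 2| + |β / 2|)
  set K₂ : ℝ := 2 ^ (|m + p * β - β / 2| + |β / 2|)
  have he₁ : 2 ^ (p - 1) * 18 ^ p * ε ^ (-(p + 1)) * (K₁ * ε) =
      2 ^ (p - 1) * (18 ^ p * K₁) * ε ^ (-p) := by
    rw [show -p = -(p + 1) + 1 by ring, Real.rpow_add_one hε.ne']
    ring
  have he₂ : 2 ^ (p - 1) * ε ^ (p - 1) * (K₂ * ε) = 2 ^ (p - 1) * K₂ * ε ^ p := by
    rw [show p = p - 1 + 1 by ring, Real.rpow_add_one hε.ne', show p - 1 + 1 = p by ring]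
    ring
  calc ∫⁻ y in Ioi 1, ENNReal.ofReal (y ^ (m + p * (β / 2))) * ‖u' y‖ₑ ^ p
      ≤ _ := setLIntegral_rpow_mul_enorm_deriv_rpow_le_window hp hε hu_meas hu''_meas hu hu'
    _ ≤ ENNReal.ofReal (2 ^ (p - 1) * 18 ^ p * ε ^ (-(p + 1))) * (ENNReal.ofReal (K₁ * ε) *
            ∫⁻ t in Ioi 1, ENNReal.ofReal (t ^ (m - β / 2 + β / 2)) * ‖u t‖ₑ ^ p) +
          ENNReal.ofReal (2 ^ (p - 1) * ε ^ (p - 1)) * (ENNReal.ofReal (K₂ * ε) *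
            ∫⁻ t in Ioi 1, ENNReal.ofReal (t ^ (m + p * β - β / 2 + β / 2)) * ‖u'' t‖ₑ ^ p) := by
        gcongr <;> exact setLIntegral_rpow_mul_lintegral_window_le _ hβ hε.le hε'
          (by fun_prop)
    _ = ENNReal.ofReal (2 ^ (p - 1) * (18 ^ p * K₁) * ε ^ (-p)) *
            (∫⁻ t in Ioi 1, ENNReal.ofReal (t ^ m) * ‖u t‖ₑ ^ p) +
          ENNReal.ofReal (2 ^ (p - 1) * K₂ * ε ^ p) *
            ∫⁻ t in Ioi 1, ENNReal.ofReal (t ^ (m + p * β)) * ‖u'' t‖ₑ ^ p := by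
        rw [sub_add_cancel, sub_add_cancel, ← mul_assoc, ← mul_assoc,
          ← ENNReal.ofReal_mul (by positivity), ← ENNReal.ofReal_mul (by positivity), he₁, he₂]
    _ ≤ _ := by
        rw [add_comm]
        unfold weightedInterpConst
        gcongr
        · exact le_add_of_nonneg_left (by positivity)
        · exact le_add_of_nonneg_right (by positivity)

lemma ae_wm1_of_forall {m : ℝ} {P : ℝ → Prop} (h : ∀ y, 1 < y → P y) : ∀ᵐ y ∂wm1 m, P y :=
  (withDensity_absolutelyContinuous _ _).ae_le (ae_restrict_of_forall_mem measurableSet_Ioi h)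

lemma eLpNorm_wm1_rpow {m p : ℝ} (hp : 0 < p) (f : ℝ → ℝ) :
    eLpNorm f (ENNReal.ofReal p) (wm1 m) ^ p =
      ∫⁻ y in Ioi 1, ENNReal.ofReal (y ^ m) * ‖f y‖ₑ ^ p := by
  rw [eLpNorm_eq_lintegral_rpow_enorm_toReal (by simpa using hp) ENNReal.ofReal_ne_top,
    ENNReal.toReal_ofReal hp.le, ← ENNReal.rpow_mul, one_div_mul_cancel hp.ne', ENNReal.rpow_one,
    wm1, lintegral_withDensity_eq_lintegral_mul_non_measurable _ (by fun_prop)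
      (ae_of_all _ fun _ => ENNReal.ofReal_lt_top)]
  rfl

lemma eLpNorm_wm1_rpow_mul_rpow {m p : ℝ} (hp : 0 < p) (a : ℝ) (f : ℝ → ℝ) :
    eLpNorm (fun y => y ^ a * f y) (ENNReal.ofReal p) (wm1 m) ^ p =
      ∫⁻ y in Ioi 1, ENNReal.ofReal (y ^ (m + p * a)) * ‖f y‖ₑ ^ p := by
  rw [eLpNorm_wm1_rpow hp]
  refine setLIntegral_congr_fun measurableSet_Ioi fun y hy => ?_
  have hy0 : 0 < y := zero_lt_one.trans hy
  rw [enorm_mul, ENNReal.mul_rpow_of_nonneg _ _ hp.le, ← mul_assoc,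
    Real.enorm_of_nonneg (by positivity), ENNReal.ofReal_rpow_of_nonneg (by positivity) hp.le,
    ← ENNReal.ofReal_mul (by positivity), ← Real.rpow_mul hy0.le, ← Real.rpow_add hy0, mul_comm a]

lemma eLpNorm_wm1_deriv_le_of_measurable {p m β ε : ℝ} (hp : 1 ≤ p)
    (hβ : β ≤ 2) (hε : 0 < ε) (hε' : ε ≤ 1 / 2) (hu_meas : Measurable u)
    (hu''_meas : Measurable u'') (hu : ∀ y, 1 < y → HasDerivAt u (u' y) y)
    (hu' : ∀ y, 1 < y → HasDerivAt u' (u'' y) y) :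
    eLpNorm (fun y => y ^ (β / 2) * u' y) (ENNReal.ofReal p) (wm1 m) ≤
      ENNReal.ofReal (weightedInterpConst p m β ^ (1 / p)) *
        (ENNReal.ofReal ε * eLpNorm (fun y => y ^ β * u'' y) (ENNReal.ofReal p) (wm1 m) +
          ENNReal.ofReal (1 / ε) * eLpNorm u (ENNReal.ofReal p) (wm1 m)) := by
  have hp0 : 0 < p := zero_lt_one.trans_le hp
  have hD : 0 ≤ weightedInterpConst p m β := by unfold weightedInterpConst; positivity
  rw [mul_add, ← mul_assoc, ← mul_assoc, ← ENNReal.ofReal_mul (by positivity),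
    ← ENNReal.ofReal_mul (by positivity)]
  refine le_add_of_rpow_le_rpow_add_rpow hp ?_
  rw [ENNReal.mul_rpow_of_nonneg _ _ hp0.le, ENNReal.mul_rpow_of_nonneg _ _ hp0.le,
    ENNReal.ofReal_rpow_of_nonneg (by positivity) hp0.le,
    ENNReal.ofReal_rpow_of_nonneg (by positivity) hp0.le,
    Real.mul_rpow (by positivity) hε.le, Real.mul_rpow (by positivity) (by positivity),
    ← Real.rpow_mul hD, one_div_mul_cancel hp0.ne', Real.rpow_one, one_div,
    Real.inv_rpow hε.le, ← Real.rpow_neg hε.le, eLpNorm_wm1_rpow_mul_rpow hp0,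
    eLpNorm_wm1_rpow_mul_rpow hp0, eLpNorm_wm1_rpow hp0]
  exact setLIntegral_rpow_mul_enorm_deriv_rpow_le hp hβ hε hε' hu_meas hu''_meas hu hu'

end

/-- Weighted interpolation inequality away from the origin (`β < 2`):
`‖y^{β/2} u'‖_{L^p((1,∞);y^m dy)} ≤ C (ε ‖y^β u''‖ + ε⁻¹ ‖u‖)` for `0 < ε < ε₀`. -/
theorem stmt11 (p m β : ℝ) (hp : 1 < p) (hβ : β < 2) :
    ∃ C > (0 : ℝ), ∃ ε₀ > (0 : ℝ), ∀ u u' u'' : ℝ → ℝ,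
      (∀ y, 1 < y → HasDerivAt u (u' y) y) →
      (∀ y, 1 < y → HasDerivAt u' (u'' y) y) →
      ∀ ε : ℝ, 0 < ε → ε < ε₀ →
        eLpNorm (fun y => y ^ (β / 2) * u' y) (ENNReal.ofReal p) (wm1 m) ≤
          ENNReal.ofReal C *
            (ENNReal.ofReal ε *
                eLpNorm (fun y => y ^ β * u'' y) (ENNReal.ofReal p) (wm1 m)
              + ENNReal.ofReal (1 / ε) * eLpNorm u (ENNReal.ofReal p) (wm1 m)) := by
  refine ⟨weightedInterpConst p m β ^ (1 / p), by unfold weightedInterpConst; positivity, 1 / 2,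
    by norm_num, fun u u' u'' hu hu' ε hε hε' => ?_⟩
  classical
  -- `u` and `u''` need not be measurable: replace them by measurable functions that agree with
  -- them on `(1, ∞)`
  set U := (Ioi 1).piecewise u 0
  have hU : ∀ y, 1 < y → HasDerivAt U (u' y) y := fun y hy =>
    (hu y hy).congr_of_eventuallyEq <| eventually_of_mem (Ioi_mem_nhds hy) fun _ hz =>
      piecewise_eq_of_mem _ _ _ hz
  have hU_meas : Measurable U := ContinuousOn.measurable_piecewise
    (fun y hy => (hu y hy).continuousAt.continuousWithinAt) continuousOn_const measurableSet_Ioi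
  have hV : ∀ y, 1 < y → HasDerivAt u' (deriv u' y) y := fun y hy =>
    (hu' y hy).differentiableAt.hasDerivAt
  rw [eLpNorm_congr_ae (ae_wm1_of_forall fun y hy => (piecewise_eq_of_mem _ _ _ hy).symm :
      u =ᵐ[wm1 m] U),
    eLpNorm_congr_ae (ae_wm1_of_forall fun y hy => by simp only [(hu' y hy).deriv] :
      (fun y => y ^ β * u'' y) =ᵐ[wm1 m] fun y => y ^ β * deriv u' y)]
  exact eLpNorm_wm1_deriv_le_of_measurable hp.le hβ.le hε hε'.le hU_meas (measurable_deriv u')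
    hU hV
end

section
/- Let $p > 1$, $m \in \mathbb{R}$, $\alpha_2 < 2$, $c > 1$ with $\frac{m+1}{p} < c + 1 - \alpha_2$. Let $u \in W^{2,p}_{loc}((0,\infty))$ with $y^{\alpha_2}(u'' + c u'/y) \in L^p((0,\infty); y^m dy)$, and suppose $\frac{m+1}{p} \neq 2 - \alpha_2$. Then $\lim_{y \to 0^+} y^{c-1} u(y) = 0$ if and only if $\lim_{y \to 0^+} y^c u'(y) = 0$. Moreover, when the limit $v_0 = \lim_{y\to 0^+} y^c u'(y)$ exists (it always does under these hypotheses), one has $\lim_{y \to 0^+} y^{c-1} u(y) = \frac{v_0}{1-c}$. -/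
/-! With `v = y^c u'` one has `v' = y^(c-α₂) · y^α₂ (u'' + c u'/y)`. Hölder's inequality against
`y^m dy` makes this integrable near `0` as soon as `(m+1)/p < c + 1 - α₂`, so `v` has a limit `v₀`
at `0⁺`. Then `y^(c-1) u = u / y^(1-c)` is an `∞/∞` quotient whose quotient of derivatives is
`y^c u' / (1-c) → v₀/(1-c)`, and a L'Hôpital argument based on the mean value inequality
concludes. -/

open MeasureTheory Filter
open scoped ENNReal Topology

open Set

lemma wm_restrict_Ioc (m t : ℝ) :
    (wm m).restrict (Ioc 0 t) =
      (volume.restrict (Ioc 0 t)).withDensity fun y => ENNReal.ofReal (y ^ m) := by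
  rw [wm, restrict_withDensity measurableSet_Ioc, Measure.restrict_restrict measurableSet_Ioc,
    inter_eq_left.2 Ioc_subset_Ioi_self]

lemma integrable_wm_restrict_Ioc_iff {m t : ℝ} {g : ℝ → ℝ} :
    Integrable g ((wm m).restrict (Ioc 0 t)) ↔
      IntegrableOn (fun y => y ^ m * g y) (Ioc 0 t) := by
  rw [wm_restrict_Ioc, integrable_withDensity_iff (by fun_prop) (by simp), IntegrableOn]
  refine integrable_congr ?_
  filter_upwards [ae_restrict_mem measurableSet_Ioc] with y hy
  rw [ENNReal.toReal_ofReal (Real.rpow_nonneg hy.1.le m), mul_comm]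

lemma memLp_rpow_wm_restrict_Ioc {m b q t : ℝ} (hq : 0 < q) (hbq : -1 < b * q + m) :
    MemLp (fun y : ℝ => y ^ b) (ENNReal.ofReal q) ((wm m).restrict (Ioc 0 t)) := by
  have hmeas : AEStronglyMeasurable (fun y : ℝ => y ^ b) ((wm m).restrict (Ioc 0 t)) := by
    fun_prop
  rw [← integrable_norm_rpow_iff hmeas (by simpa using hq) ENNReal.ofReal_ne_top,
    ENNReal.toReal_ofReal hq.le, integrable_wm_restrict_Ioc_iff]
  rcases le_or_gt t 0 with ht | ht
  · simp [Ioc_eq_empty_of_le ht]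
  refine ((intervalIntegrable_iff_integrableOn_Ioc_of_le ht.le).1
    (intervalIntegral.intervalIntegrable_rpow' hbq)).congr ?_
  filter_upwards [ae_restrict_mem measurableSet_Ioc] with y hy
  rw [Real.norm_of_nonneg (Real.rpow_nonneg hy.1.le b), ← Real.rpow_mul hy.1.le,
    ← Real.rpow_add hy.1, add_comm]

lemma integrableOn_rpow_mul_of_memLp_wm {p m a t : ℝ} (hp : 1 < p) (ha : (m + 1) / p < a + 1)
    {f : ℝ → ℝ} (hf : MemLp f (ENNReal.ofReal p) (wm m)) :
    IntegrableOn (fun y => y ^ a * f y) (Ioc 0 t) := by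
  have hpq : p.HolderConjugate (p / (p - 1)) := .conjExponent hp
  have := hpq.ennrealOfReal
  have hweight : MemLp (fun y : ℝ => y ^ (a - m)) (ENNReal.ofReal (p / (p - 1)))
      ((wm m).restrict (Ioc 0 t)) := by
    refine memLp_rpow_wm_restrict_Ioc hpq.symm.pos ?_
    have hp1 : 0 < p - 1 := by linarith
    rw [div_lt_iff₀ (by linarith)] at ha
    have : (a - m) * (p / (p - 1)) + m = ((a + 1) * p - (m + 1)) / (p - 1) - 1 := by
      field_simp
      ring
    rw [this]
    linarith [div_pos (sub_pos.2 ha) hp1]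
  refine (integrable_wm_restrict_Ioc_iff.1 (hweight.integrable_mul (hf.restrict _))).congr ?_
  filter_upwards [ae_restrict_mem measurableSet_Ioc] with y hy
  simp only [Pi.mul_apply]
  rw [← mul_assoc, ← Real.rpow_add hy.1, add_sub_cancel]

lemma tendsto_nhdsGT_of_hasDerivAt_of_integrableOn {v g : ℝ → ℝ} {a b : ℝ} (hab : a < b)
    (hv : ∀ x ∈ Ioc a b, HasDerivAt v (g x) x) (hg : IntegrableOn g (Ioc a b)) :
    Tendsto v (𝓝[>] a) (𝓝 (v b - ∫ x in a..b, g x)) := by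
  have hprim : ContinuousWithinAt (fun x => ∫ t in x..b, g t) (Ioc a b) a := by
    refine ((intervalIntegral.continuousOn_primitive_interval_left ?_) a
      (left_mem_uIcc)).mono ?_
    · rwa [uIcc_of_le hab.le, integrableOn_Icc_iff_integrableOn_Ioc]
    · rw [uIcc_of_le hab.le]
      exact Ioc_subset_Icc_self
  rw [ContinuousWithinAt, nhdsWithin_Ioc_eq_nhdsGT hab] at hprim
  refine (tendsto_const_nhds.sub hprim).congr' ?_
  filter_upwards [Ioc_mem_nhdsGT hab] with x hx
  have hsub : uIcc x b ⊆ Ioc a b := by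
    rw [uIcc_of_le hx.2]
    exact Icc_subset_Ioc hx.1 le_rfl
  rw [intervalIntegral.integral_eq_sub_of_hasDerivAt (fun y hy => hv y (hsub hy))
    (hg.mono_set hsub).intervalIntegrable, sub_sub_cancel]

lemma abs_sub_le_of_abs_deriv_le_rpow {h h' : ℝ → ℝ} {c K y η : ℝ} (hc : 1 < c) (hy : 0 < y)
    (hyη : y ≤ η) (hh : ∀ s ∈ Icc y η, HasDerivAt h (h' s) s)
    (hbound : ∀ s ∈ Icc y η, |h' s| ≤ K * s ^ (-c)) :
    |h η - h y| ≤ K / (c - 1) * y ^ (1 - c) := by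
  have hK : 0 ≤ K := by
    have := (abs_nonneg _).trans (hbound y ⟨le_rfl, hyη⟩)
    exact nonneg_of_mul_nonneg_left this (Real.rpow_pos_of_pos hy _)
  set B : ℝ → ℝ := fun s => K / (c - 1) * (y ^ (1 - c) - s ^ (1 - c))
  have hB : ∀ s ∈ Icc y η, HasDerivAt B (K * s ^ (-c)) s := by
    intro s hs
    have := ((Real.hasDerivAt_rpow_const (p := 1 - c) (Or.inl (hy.trans_le hs.1).ne')).const_sub
      (y ^ (1 - c))).const_mul (K / (c - 1))
    refine this.congr_deriv ?_
    rw [show 1 - c - 1 = -c by ring]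
    field_simp [(sub_pos.2 hc).ne']
    ring
  have key := image_norm_le_of_norm_deriv_right_le_deriv_boundary' (f := fun s => h s - h y)
    (a := y) (b := η) (B := B)
    (fun s hs => ((hh s hs).continuousAt.sub continuousAt_const).continuousWithinAt)
    (fun s hs => ((hh s (Ico_subset_Icc_self hs)).sub_const _).hasDerivWithinAt)
    (by simp [B]) (fun s hs => (hB s hs).continuousAt.continuousWithinAt)
    (fun s hs => (hB s (Ico_subset_Icc_self hs)).hasDerivWithinAt)
    (fun s hs => hbound s (Ico_subset_Icc_self hs)) ⟨hyη, le_rfl⟩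
  refine key.trans ?_
  have : 0 ≤ η ^ (1 - c) := Real.rpow_nonneg (hy.le.trans hyη) _
  have : 0 ≤ K / (c - 1) := div_nonneg hK (by linarith)
  simp only [B]
  nlinarith

lemma tendsto_rpow_nhdsGT_zero {e : ℝ} (he : 0 < e) :
    Tendsto (fun y : ℝ => y ^ e) (𝓝[>] 0) (𝓝 0) := by
  have := (Real.continuousAt_rpow_const 0 e (Or.inr he.le)).tendsto
  rw [Real.zero_rpow he.ne'] at this
  exact tendsto_nhdsWithin_of_tendsto_nhds this

lemma lhopital_rpow_nhdsGT_zero_of_tendsto_zero {c : ℝ} (hc : 1 < c) {h h' : ℝ → ℝ}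
    (hh : ∀ y, 0 < y → HasDerivAt h (h' y) y)
    (hlim : Tendsto (fun y => y ^ c * h' y) (𝓝[>] 0) (𝓝 0)) :
    Tendsto (fun y => y ^ (c - 1) * h y) (𝓝[>] 0) (𝓝 0) := by
  rw [Metric.tendsto_nhds]
  intro ε hε
  have hK : 0 < ε * (c - 1) / 2 := by have := sub_pos.2 hc; positivity
  obtain ⟨η, hη, hsmall⟩ :=
    (nhdsGT_basis (0 : ℝ)).eventually_iff.1 (Metric.tendsto_nhds.1 hlim _ hK)
  have hbound : ∀ s ∈ Ioo 0 η, |h' s| ≤ ε * (c - 1) / 2 * s ^ (-c) := by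
    intro s hs
    have := (hsmall hs).le
    rw [Real.dist_eq, sub_zero, abs_mul, abs_of_pos (Real.rpow_pos_of_pos hs.1 c)] at this
    rw [Real.rpow_neg hs.1.le, ← div_eq_mul_inv, le_div_iff₀ (Real.rpow_pos_of_pos hs.1 c)]
    linarith
  have hconst : Tendsto (fun y : ℝ => y ^ (c - 1) * |h (η / 2)|) (𝓝[>] 0) (𝓝 0) := by
    simpa using (tendsto_rpow_nhdsGT_zero (sub_pos.2 hc)).mul_const |h (η / 2)|
  filter_upwards [Ioo_mem_nhdsGT (half_pos hη), Metric.tendsto_nhds.1 hconst _ (half_pos hε)]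
    with y hy hyc
  have hypos := Real.rpow_pos_of_pos hy.1 (c - 1)
  rw [Real.dist_eq, sub_zero, abs_of_nonneg (by positivity)] at hyc
  rw [Real.dist_eq, sub_zero, abs_mul, abs_of_pos hypos]
  have hdiff := abs_sub_le_of_abs_deriv_le_rpow hc hy.1 hy.2.le (h := h) (h' := h')
    (fun s hs => hh s (hy.1.trans_le hs.1))
    (fun s hs => hbound s ⟨hy.1.trans_le hs.1, hs.2.trans_lt (half_lt_self hη)⟩)
  have hyc1 : y ^ (c - 1) * y ^ (1 - c) = 1 := by
    rw [← Real.rpow_add hy.1]; simp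
  calc y ^ (c - 1) * |h y| ≤ y ^ (c - 1) * |h (η / 2)| + y ^ (c - 1) * |h (η / 2) - h y| := by
        rw [← mul_add]
        gcongr
        linarith [abs_sub_abs_le_abs_sub (h y) (h (η / 2)), abs_sub_comm (h y) (h (η / 2))]
    _ < ε / 2 + y ^ (c - 1) * (ε * (c - 1) / 2 / (c - 1) * y ^ (1 - c)) :=
        add_lt_add_of_lt_of_le hyc (mul_le_mul_of_nonneg_left hdiff hypos.le)
    _ = ε := by
        rw [mul_left_comm, hyc1, mul_one]
        field_simp [(sub_pos.2 hc).ne']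
        ring

lemma lhopital_rpow_nhdsGT_zero {c v₀ : ℝ} (hc : 1 < c) {u u' : ℝ → ℝ}
    (hu : ∀ y, 0 < y → HasDerivAt u (u' y) y)
    (hv : Tendsto (fun y => y ^ c * u' y) (𝓝[>] 0) (𝓝 v₀)) :
    Tendsto (fun y => y ^ (c - 1) * u y) (𝓝[>] 0) (𝓝 (v₀ / (1 - c))) := by
  have hc' : 1 - c ≠ 0 := by linarith
  have hh : ∀ y, 0 < y →
      HasDerivAt (fun y => u y - v₀ / (1 - c) * y ^ (1 - c)) (u' y - v₀ * y ^ (-c)) y := by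
    intro y hy
    refine ((hu y hy).sub ((Real.hasDerivAt_rpow_const (Or.inl hy.ne')).const_mul _)).congr_deriv ?_
    rw [show 1 - c - 1 = -c by ring]
    field_simp
  have hlim : Tendsto (fun y => y ^ c * (u' y - v₀ * y ^ (-c))) (𝓝[>] 0) (𝓝 0) := by
    refine (sub_self v₀ ▸ hv.sub_const v₀).congr' ?_
    filter_upwards [self_mem_nhdsWithin] with y (hy : 0 < y)
    rw [mul_sub, mul_left_comm, ← Real.rpow_add hy, add_neg_cancel, Real.rpow_zero, mul_one]
  refine (zero_add (v₀ / (1 - c)) ▸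
    (lhopital_rpow_nhdsGT_zero_of_tendsto_zero hc hh hlim).add_const _).congr' ?_
  filter_upwards [self_mem_nhdsWithin] with y (hy : 0 < y)
  rw [mul_sub, mul_left_comm, ← Real.rpow_add hy, show c - 1 + (1 - c) = 0 by ring,
    Real.rpow_zero, mul_one, sub_add_cancel]

theorem stmt16_general (p m α₂ c : ℝ) (hp : 1 < p) (hc : 1 < c)
    (h : (m + 1) / p < c + 1 - α₂)
    (u u' u'' : ℝ → ℝ)
    (h1 : ∀ y, 0 < y → HasDerivAt u (u' y) y)
    (h2 : ∀ y, 0 < y → HasDerivAt u' (u'' y) y)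
    (hf : MemLp (fun y => y ^ α₂ * (u'' y + c * u' y / y)) (ENNReal.ofReal p) (wm m)) :
    ∃ v₀ : ℝ, Tendsto (fun y => y ^ c * u' y) (𝓝[>] 0) (𝓝 v₀) ∧
      Tendsto (fun y => y ^ (c - 1) * u y) (𝓝[>] 0) (𝓝 (v₀ / (1 - c))) ∧
      (Tendsto (fun y => y ^ (c - 1) * u y) (𝓝[>] 0) (𝓝 0) ↔
        Tendsto (fun y => y ^ c * u' y) (𝓝[>] 0) (𝓝 0)) := by
  have hv : ∀ y ∈ Ioc (0 : ℝ) 1, HasDerivAt (fun y => y ^ c * u' y)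
      (y ^ (c - α₂) * (y ^ α₂ * (u'' y + c * u' y / y))) y := by
    intro y hy
    refine ((Real.hasDerivAt_rpow_const (Or.inl hy.1.ne')).mul (h2 y hy.1)).congr_deriv ?_
    rw [← mul_assoc, ← Real.rpow_add hy.1, sub_add_cancel, Real.rpow_sub_one hy.1.ne']
    field_simp
    ring
  have hg := integrableOn_rpow_mul_of_memLp_wm (a := c - α₂) (t := 1) hp (by linarith) hf
  obtain ⟨v₀, hv₀⟩ : ∃ v₀, Tendsto (fun y => y ^ c * u' y) (𝓝[>] 0) (𝓝 v₀) :=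
    ⟨_, tendsto_nhdsGT_of_hasDerivAt_of_integrableOn one_pos hv hg⟩
  have hu := lhopital_rpow_nhdsGT_zero hc h1 hv₀
  refine ⟨v₀, hv₀, hu, fun H => ?_, fun H => ?_⟩
  · obtain rfl := (div_eq_zero_iff.1 (tendsto_nhds_unique hu H)).resolve_right (by linarith)
    exact hv₀
  · obtain rfl := tendsto_nhds_unique hv₀ H
    simpa using hu

/-- For `c > 1`, `(m+1)/p < c+1-α₂`, `(m+1)/p ≠ 2-α₂` and
`y^{α₂}(u'' + c u'/y) ∈ L^p_m`: the trace `v₀ = lim_{y→0⁺} y^c u'(y)` exists,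
`lim_{y→0⁺} y^{c-1} u(y) = v₀/(1-c)`, and hence `y^{c-1}u → 0` iff `y^c u' → 0`. -/
theorem stmt16 (p m α₂ c : ℝ) (hp : 1 < p) (hα : α₂ < 2) (hc : 1 < c)
    (h : (m + 1) / p < c + 1 - α₂) (hne : (m + 1) / p ≠ 2 - α₂)
    (u u' u'' : ℝ → ℝ)
    (h1 : ∀ y, 0 < y → HasDerivAt u (u' y) y)
    (h2 : ∀ y, 0 < y → HasDerivAt u' (u'' y) y)
    (hf : MemLp (fun y => y ^ α₂ * (u'' y + c * u' y / y)) (ENNReal.ofReal p) (wm m)) :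
    ∃ v₀ : ℝ, Tendsto (fun y => y ^ c * u' y) (𝓝[>] 0) (𝓝 v₀) ∧
      Tendsto (fun y => y ^ (c - 1) * u y) (𝓝[>] 0) (𝓝 (v₀ / (1 - c))) ∧
      (Tendsto (fun y => y ^ (c - 1) * u y) (𝓝[>] 0) (𝓝 0) ↔
        Tendsto (fun y => y ^ c * u' y) (𝓝[>] 0) (𝓝 0)) :=
  stmt16_general p m α₂ c hp hc h u u' u'' h1 h2 hf
end
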